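/- arXiv:2011.01690 — 10 statements merged into one kernel-verified Lean document; each statement's English description precedes it below -/
import Mathlib

section
/- Let Γ = ⟨α, β⟩ with gcd(α,β)=1, α < β, and let x be a gap of Γ written as x = αβ − aα − bβ with 1 ≤ a ≤ β−1, 1 ≤ b ≤ α−1. Then 2x ∈ Γ if and only if a ≤ β/2 and b ≤ α/2. -/
/-- The numerical semigroup generated by α and β. -/
def S (α β : ℕ) : Set ℕ := {n | ∃ x y : ℕ, n = x * α + y * β}

theorem stmt3 (α β x a b : ℕ) (hα : 0 < α) (hαβ : α < β) (hcop : Nat.Coprime α β)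
    (hx : x ∉ S α β) (ha1 : 1 ≤ a) (ha2 : a ≤ β - 1) (hb1 : 1 ≤ b) (hb2 : b ≤ α - 1)
    (hrep : x + a * α + b * β = α * β) :
    2 * x ∈ S α β ↔ 2 * a ≤ β ∧ 2 * b ≤ α := by
  have hrep' : (x : ℤ) + a * α + b * β = α * β := by exact_mod_cast hrep
  constructor
  · rintro ⟨u, v, huv⟩
    have huv' : ((2 * x : ℕ) : ℤ) = u * α + v * β := by exact_mod_cast huv
    push_cast at huv'
    have h2 : (u + 2 * a) * α + (v + 2 * b) * β = 2 * (α * β) := by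
      have : ((u + 2 * a) * α + (v + 2 * b) * β : ℤ) = 2 * (α * β) := by
        linear_combination 2 * hrep' - huv'
      exact_mod_cast this
    have hβdvd : β ∣ (u + 2 * a) * α := by
      have hd : β ∣ (u + 2 * a) * α + (v + 2 * b) * β := h2 ▸ ⟨2 * α, by ring⟩
      exact (Nat.dvd_add_iff_left (dvd_mul_left β (v + 2 * b))).mpr hd
    have hαdvd : α ∣ (v + 2 * b) * β := by
      have hd : α ∣ (u + 2 * a) * α + (v + 2 * b) * β := h2 ▸ ⟨2 * β, by ring⟩
      exact (Nat.dvd_add_iff_right (dvd_mul_left α (u + 2 * a))).mpr hd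
    obtain ⟨k, hk⟩ := (hcop.symm.dvd_of_dvd_mul_right hβdvd)
    obtain ⟨l, hl⟩ := (hcop.dvd_of_dvd_mul_right hαdvd)
    have hkl : (k + l) * (α * β) = 2 * (α * β) := by rw [← h2, hk, hl]; ring
    have hkl2 : k + l = 2 :=
      Nat.eq_of_mul_eq_mul_right (Nat.mul_pos hα (lt_trans hα hαβ)) hkl
    have hk0 : k ≠ 0 := by rintro rfl; simp at hk; omega
    have hl0 : l ≠ 0 := by rintro rfl; simp at hl; omega
    have hk1 : k = 1 := by omega
    have hl1 : l = 1 := by omega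
    rw [hk1, mul_one] at hk
    rw [hl1, mul_one] at hl
    omega
  · rintro ⟨h2a, h2b⟩
    refine ⟨β - 2 * a, α - 2 * b, ?_⟩
    have : ((2 * x : ℕ) : ℤ) = (β - 2 * a) * α + (α - 2 * b) * β := by
      push_cast [h2a, h2b]
      linear_combination 2 * hrep'
    exact_mod_cast this
end

section
/- Let Γ = ⟨α, β⟩ with gcd(α,β)=1, and let g = αβ − aα − bβ be a gap of Γ (with 1 ≤ a ≤ β−1, 1 ≤ b ≤ α−1). Then the Γ-semimodule Δ = (Γ + 0) ∪ (Γ + g) satisfies (Γ)∩(Γ+g) = (Γ + (αβ − bβ)) ∪ (Γ + (αβ − aα)), i.e., the syzygy module of Δ is generated by αβ − bβ and αβ − aα. -/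
theorem stmt5 (α β g a b : ℕ) (hα : 0 < α) (hαβ : α < β) (hcop : Nat.Coprime α β)
    (hg : g ∉ S α β) (ha1 : 1 ≤ a) (ha2 : a ≤ β - 1) (hb1 : 1 ≤ b) (hb2 : b ≤ α - 1)
    (hrep : g + a * α + b * β = α * β) :
    S α β ∩ {n | ∃ s ∈ S α β, n = g + s} =
      {n | ∃ s ∈ S α β, n = (α * β - b * β) + s} ∪
        {n | ∃ s ∈ S α β, n = (α * β - a * α) + s} := by
  have haβ : a ≤ β := by omega
  have hbα : b ≤ α := by omega
  have hgb : α * β - b * β = g + a * α :=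
    Nat.sub_eq_of_eq_add (by linarith [hrep])
  have hga : α * β - a * α = g + b * β :=
    Nat.sub_eq_of_eq_add (by linarith [hrep])
  have hcopZ : IsCoprime (α : ℤ) (β : ℤ) := Nat.isCoprime_iff_coprime.mpr hcop
  have hrepZ : (g : ℤ) + a * α + b * β = α * β := by exact_mod_cast hrep
  ext n
  simp only [Set.mem_inter_iff, Set.mem_union, Set.mem_setOf_eq, S]
  constructor
  · rintro ⟨⟨x, y, hn⟩, s, ⟨u, v, hs⟩, hgs⟩
    have e1N : x * α + y * β = g + (u * α + v * β) := by rw [← hs, ← hgs, hn]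
    have e1 : (x : ℤ) * α + y * β = g + u * α + v * β := by
      have h := congrArg (Nat.cast : ℕ → ℤ) e1N
      push_cast at h
      linarith
    have key : ((x : ℤ) + a) * α + ((y : ℤ) + b) * β = α * β + u * α + v * β := by
      linear_combination e1 + hrepZ
    have hdvd1 : (α : ℤ) ∣ ((y : ℤ) + b - v) := by
      have h : (α : ℤ) ∣ ((y : ℤ) + b - v) * β := ⟨β - ((x : ℤ) + a - u), by linear_combination key⟩
      exact hcopZ.dvd_of_dvd_mul_right h
    have hdvd2 : (β : ℤ) ∣ ((x : ℤ) + a - u) := by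
      have h : (β : ℤ) ∣ ((x : ℤ) + a - u) * α := ⟨α - ((y : ℤ) + b - v), by linear_combination key⟩
      exact hcopZ.symm.dvd_of_dvd_mul_right h
    obtain ⟨q, hq⟩ := hdvd1
    obtain ⟨p, hp⟩ := hdvd2
    have hα0 : (0 : ℤ) < (α : ℤ) := by exact_mod_cast hα
    have hβ0 : (0 : ℤ) < (β : ℤ) := by exact_mod_cast (by omega : 0 < β)
    have hαβ0 : (0 : ℤ) < (α : ℤ) * β := mul_pos hα0 hβ0
    have hpq : p + q = 1 := by
      have h : (p + q) * ((α : ℤ) * β) = 1 * ((α : ℤ) * β) := by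
        linear_combination key - (α : ℤ) * hp - (β : ℤ) * hq
      exact mul_right_cancel₀ (ne_of_gt hαβ0) h
    rcases le_or_gt 1 q with hq1 | hq1
    · -- p ≤ 0, so u ≥ x + a ≥ a
      have hp0 : p ≤ 0 := by omega
      have h1 : (β : ℤ) * p ≤ 0 := mul_nonpos_iff.mpr (Or.inl ⟨hβ0.le, hp0⟩)
      have hx0 : (0 : ℤ) ≤ (x : ℤ) := Int.natCast_nonneg x
      have hua : (a : ℤ) ≤ u := by linarith [hp]
      have huaN : a ≤ u := by exact_mod_cast hua
      obtain ⟨w, hw⟩ : ∃ w, u = a + w := ⟨u - a, by omega⟩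
      left
      refine ⟨w * α + v * β, ⟨w, v, rfl⟩, ?_⟩
      rw [hgb, hgs, hs, hw]; ring
    · -- q ≤ 0, so v ≥ b
      have hq0 : q ≤ 0 := by omega
      have h1 : (α : ℤ) * q ≤ 0 := mul_nonpos_iff.mpr (Or.inl ⟨hα0.le, hq0⟩)
      have hy0 : (0 : ℤ) ≤ (y : ℤ) := Int.natCast_nonneg y
      have hvb : (b : ℤ) ≤ v := by linarith [hq]
      have hvbN : b ≤ v := by exact_mod_cast hvb
      obtain ⟨w, hw⟩ : ∃ w, v = b + w := ⟨v - b, by omega⟩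
      right
      refine ⟨u * α + w * β, ⟨u, w, rfl⟩, ?_⟩
      rw [hga, hgs, hs, hw]; ring
  · rintro (⟨s, ⟨u, v, hs⟩, hn⟩ | ⟨s, ⟨u, v, hs⟩, hn⟩)
    · constructor
      · refine ⟨u, (α - b) + v, ?_⟩
        rw [hn, hs, ← Nat.sub_mul]
        ring
      · refine ⟨(a + u) * α + v * β, ⟨a + u, v, rfl⟩, ?_⟩
        rw [hn, hs, hgb]; ring
    · constructor
      · refine ⟨(β - a) + u, v, ?_⟩
        rw [hn, hs]
        have : α * β - a * α = (β - a) * α := by rw [Nat.sub_mul, Nat.mul_comm α β]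
        rw [this]; ring
      · refine ⟨u * α + (b + v) * β, ⟨u, b + v, rfl⟩, ?_⟩
        rw [hn, hs, hga]; ring
end

section
/- Let Γ = ⟨α, β⟩ with gcd(α,β)=1 and g = αβ − aα − bβ a gap (1 ≤ a ≤ β−1, 1 ≤ b ≤ α−1). Let Δ = Γ ∪ (Γ + g). Then |ℕ \ Δ| = |ℕ \ Γ| − a·b, i.e., the number of gaps of the semimodule Δ equals (α−1)(β−1)/2 − ab. -/
/-- The Γ-semimodule generated by [0, g], i.e. Γ ∪ (Γ + g). -/
def Smod (α β g : ℕ) : Set ℕ := S α β ∪ {n | ∃ s ∈ S α β, n = g + s}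

/-- The semCond of a subset of ℕ: the least c such that all n ≥ c belong. -/
noncomputable def semCond (Δ : Set ℕ) : ℕ := sInf {c | ∀ n, c ≤ n → n ∈ Δ}

/-- δ(Δ): the number of elements of Δ below the semCond. -/
noncomputable def semDelta (Δ : Set ℕ) : ℕ := Set.ncard {x ∈ Δ | x < semCond Δ}

/-- The Wilf number of a gap g of ⟨α,β⟩: W(g) = 2 δ(Δ) − c(Δ) for Δ = Γ ∪ (Γ+g). -/
noncomputable def W (α β g : ℕ) : ℤ :=
  2 * (semDelta (Smod α β g) : ℤ) - (semCond (Smod α β g) : ℤ)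

lemma S_add {α β m n : ℕ} (hm : m ∈ S α β) (hn : n ∈ S α β) : m + n ∈ S α β := by
  obtain ⟨x, y, rfl⟩ := hm; obtain ⟨x', y', rfl⟩ := hn
  exact ⟨x + x', y + y', by ring⟩

lemma mem_S_of_int {α β : ℕ} {n : ℕ} {x y : ℤ} (hx : 0 ≤ x) (hy : 0 ≤ y)
    (h : (n : ℤ) = x * α + y * β) : n ∈ S α β := by
  refine ⟨x.toNat, y.toNat, ?_⟩
  have h2 : ((x.toNat * α + y.toNat * β : ℕ) : ℤ) = (n : ℤ) := by
    push_cast [Int.toNat_of_nonneg hx, Int.toNat_of_nonneg hy]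
    linarith
  exact_mod_cast h2.symm

lemma rep_unique {α β : ℕ} (hcop : Nat.Coprime α β) (hβ : 0 < β) {x y x' y' : ℤ}
    (hx : 0 ≤ x) (hxβ : x < β) (hx' : 0 ≤ x') (hx'β : x' < β)
    (h : x * α + y * β = x' * α + y' * β) : x = x' ∧ y = y' := by
  have hco : IsCoprime (β : ℤ) (α : ℤ) := Nat.isCoprime_iff_coprime.mpr hcop.symm
  have hdvd : (β : ℤ) ∣ (x - x') * α := ⟨y' - y, by linarith [h]⟩
  obtain ⟨k, hk⟩ := hco.dvd_of_dvd_mul_right hdvd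
  have hβZ : (0 : ℤ) < β := by exact_mod_cast hβ
  have hk1 : k < 1 := by nlinarith
  have hk2 : -1 < k := by nlinarith
  have hk0 : k = 0 := by omega
  have hxx : x = x' := by rw [hk0, mul_zero] at hk; linarith
  refine ⟨hxx, ?_⟩
  have : y * (β : ℤ) = y' * β := by rw [hxx] at h; linarith
  exact mul_right_cancel₀ (by positivity) this

lemma exists_rep {α β : ℕ} (hcop : Nat.Coprime α β) (hβ : 0 < β) (n : ℤ) :
    ∃ x y : ℤ, 0 ≤ x ∧ x < β ∧ n = x * α + y * β := by
  obtain ⟨u, v, huv⟩ := Nat.isCoprime_iff_coprime.mpr hcop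
  have hβZ : (0 : ℤ) < β := by exact_mod_cast hβ
  refine ⟨(n * u) % β, n * v + ((n * u) / β) * α, Int.emod_nonneg _ hβZ.ne',
    Int.emod_lt_of_pos _ hβZ, ?_⟩
  have hmod : (n * u) % β = n * u - β * ((n * u) / β) := Int.emod_def _ _
  linear_combination -(α : ℤ) * hmod - n * huv

lemma mem_S_iff {α β : ℕ} (hcop : Nat.Coprime α β) (hβ : 0 < β) {n : ℕ} {x y : ℤ}
    (hx : 0 ≤ x) (hxβ : x < β) (h : (n : ℤ) = x * α + y * β) : n ∈ S α β ↔ 0 ≤ y := by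
  constructor
  · rintro ⟨p, q, hpq⟩
    have hβZ : (0 : ℤ) < β := by exact_mod_cast hβ
    have hmd : (p : ℤ) % β = p - β * ((p : ℤ) / β) := Int.emod_def _ _
    have hrep2 : (x : ℤ) * α + y * β = ((p : ℤ) % β) * α + ((q : ℤ) + α * ((p : ℤ) / β)) * β := by
      rw [← h, hpq]; push_cast; linear_combination -(α : ℤ) * hmd
    obtain ⟨-, hy⟩ := rep_unique hcop hβ hx hxβ (Int.emod_nonneg _ hβZ.ne')
      (Int.emod_lt_of_pos _ hβZ) hrep2
    have hdiv : 0 ≤ (p : ℤ) / β := Int.ediv_nonneg (by positivity) hβZ.le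
    rw [hy]; positivity
  · intro hy; exact mem_S_of_int hx hy h

set_option maxHeartbeats 1000000

theorem stmt7 (α β g a b : ℕ) (hα : 0 < α) (hαβ : α < β) (hcop : Nat.Coprime α β)
    (hg : g ∉ S α β) (ha1 : 1 ≤ a) (ha2 : a ≤ β - 1) (hb1 : 1 ≤ b) (hb2 : b ≤ α - 1)
    (hrep : g + a * α + b * β = α * β) :
    Set.ncard {n : ℕ | n ∉ Smod α β g} = (α - 1) * (β - 1) / 2 - a * b := by
  classical
  have hα2 : 2 ≤ α := by omega
  have hβ0 : 0 < β := by omega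
  have hαZ : (0 : ℤ) < α := by exact_mod_cast hα
  have hβZ : (0 : ℤ) < β := by exact_mod_cast hβ0
  have hgZ : (g : ℤ) = α * β - a * α - b * β := by
    have := congrArg (Nat.cast (R := ℤ)) hrep; push_cast at this; linarith
  have haZ : (1 : ℤ) ≤ a ∧ (a : ℤ) ≤ (β : ℤ) - 1 := by
    constructor <;> [exact_mod_cast ha1; (have : a ≤ β - 1 := ha2; omega)]
  have hbZ : (1 : ℤ) ≤ b ∧ (b : ℤ) ≤ (α : ℤ) - 1 := by
    constructor <;> [exact_mod_cast hb1; (have : b ≤ α - 1 := hb2; omega)]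
  set N : ℕ := (α - 1) * (β - 1) with hNdef
  have hNZ : (N : ℤ) = (α : ℤ) * β - α - β + 1 := by
    rw [hNdef, Nat.cast_mul, Nat.cast_sub (by omega : 1 ≤ α), Nat.cast_sub (by omega : 1 ≤ β)]
    push_cast; ring
  have hN1 : 1 ≤ N := by
    have : (1 : ℤ) ≤ (N : ℤ) := by nlinarith
    exact_mod_cast this
  -- every n ≥ N is in S
  have hbig : ∀ n : ℕ, N ≤ n → n ∈ S α β := by
    intro n hn
    obtain ⟨x, y, hx, hxβ, hxy⟩ := exists_rep hcop hβ0 (n : ℤ)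
    refine mem_S_of_int hx ?_ hxy
    by_contra hy
    push_neg at hy
    have hy1 : y ≤ -1 := by omega
    have hxle : x ≤ (β : ℤ) - 1 := by omega
    have hnZ : (N : ℤ) ≤ n := by exact_mod_cast hn
    nlinarith
  have hGN : ∀ n : ℕ, n ∉ S α β → n < N := by
    intro n hn; by_contra h; exact hn (hbig n (by omega))
  -- N - 1 is not in S
  have hFnot : (N - 1) ∉ S α β := by
    have hcast : ((N - 1 : ℕ) : ℤ) = ((β : ℤ) - 1) * α + (-1) * β := by
      rw [Nat.cast_sub hN1, hNZ]; ring
    rw [mem_S_iff hcop hβ0 (by linarith) (by linarith) hcast]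
    omega
  set Gset : Finset ℕ := (Finset.range N).filter (fun n => n ∉ S α β) with hGdef
  set Hset : Finset ℕ := (Finset.range N).filter (fun n => n ∈ S α β) with hHdef
  have hmemG : ∀ n : ℕ, n ∈ Gset ↔ n ∉ S α β := by
    intro n
    simp only [hGdef, Finset.mem_filter, Finset.mem_range]
    exact ⟨fun h => h.2, fun h => ⟨hGN n h, h⟩⟩
  have hcardGH : Gset.card = Hset.card := by
    refine Finset.card_bij (fun n _ => N - 1 - n) ?_ ?_ ?_
    · intro n hn
      rw [hmemG] at hn
      have hnN : n < N := hGN n hn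
      obtain ⟨x, y, hx, hxβ, hxy⟩ := exists_rep hcop hβ0 (n : ℤ)
      have hy : y ≤ -1 := by
        have := (mem_S_iff hcop hβ0 hx hxβ hxy).not.mp hn
        omega
      simp only [hHdef, Finset.mem_filter, Finset.mem_range]
      constructor
      · omega
      · refine mem_S_of_int (x := (β : ℤ) - 1 - x) (y := -1 - y) (by linarith) (by linarith) ?_
        have : ((N - 1 - n : ℕ) : ℤ) = (N : ℤ) - 1 - n := by
          have h1 : n ≤ N - 1 := by omega
          omega
        rw [this, hNZ, hxy]; ring
    · intro n hn m hm h
      have h' : N - 1 - n = N - 1 - m := h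
      rw [hmemG] at hn hm
      have := hGN n hn; have := hGN m hm
      omega
    · intro m hm
      simp only [hHdef, Finset.mem_filter, Finset.mem_range] at hm
      refine ⟨N - 1 - m, ?_, ?_⟩
      · rw [hmemG]
        intro hns
        have he : (N - 1 - m) + m = N - 1 := by omega
        exact hFnot (he ▸ S_add hns hm.2)
      · show N - 1 - (N - 1 - m) = m
        omega
  have hGHsum : Gset.card + Hset.card = N := by
    have h2 := Finset.card_filter_add_card_filter_not
      (s := Finset.range N) (p := fun n => n ∈ S α β)
    rw [Finset.card_range] at h2
    rw [hGdef, hHdef]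
    omega
  have hGcard2 : 2 * Gset.card = N := by omega
  -- the set T of gaps removed
  set f : ℕ × ℕ → ℕ := fun p => g + p.1 * α + p.2 * β with hfdef
  set T : Finset ℕ := ((Finset.range a) ×ˢ (Finset.range b)).image f with hTdef
  have hfgap : ∀ x y : ℕ, x < a → y < b → (g + x * α + y * β) ∉ S α β := by
    intro x y hxa hyb
    have hxaZ : (x : ℤ) < a := by exact_mod_cast hxa
    have hybZ : (y : ℤ) < b := by exact_mod_cast hyb
    have hcast : ((g + x * α + y * β : ℕ) : ℤ) = ((β : ℤ) - a + x) * α + ((y : ℤ) - b) * β := by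
      push_cast; rw [hgZ]; ring
    rw [mem_S_iff hcop hβ0 (by omega) (by omega) hcast]
    omega
  have hmemT : ∀ n : ℕ, n ∈ T ↔ ∃ x y : ℕ, x < a ∧ y < b ∧ n = g + x * α + y * β := by
    intro n
    simp only [hTdef, Finset.mem_image, Finset.mem_product, Finset.mem_range, hfdef, Prod.exists]
    constructor
    · rintro ⟨x, y, ⟨hx, hy⟩, rfl⟩; exact ⟨x, y, hx, hy, rfl⟩
    · rintro ⟨x, y, hx, hy, rfl⟩; exact ⟨x, y, ⟨hx, hy⟩, rfl⟩
  have hTcard : T.card = a * b := by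
    rw [hTdef, Finset.card_image_of_injOn, Finset.card_product, Finset.card_range,
      Finset.card_range]
    rintro ⟨x, y⟩ hxy ⟨x', y'⟩ hxy' hEq
    simp only [Finset.mem_coe, Finset.mem_product, Finset.mem_range] at hxy hxy'
    have hEq2 : g + x * α + y * β = g + x' * α + y' * β := hEq
    have hEqZ : (x : ℤ) * α + y * β = (x' : ℤ) * α + (y' : ℤ) * β := by
      have := congrArg (Nat.cast (R := ℤ)) hEq2; push_cast at this; linarith
    have hb1 : (x : ℤ) < β := by have : x < a := hxy.1; omega
    have hb2 : (x' : ℤ) < β := by have : x' < a := hxy'.1; omega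
    obtain ⟨h1, h2⟩ := rep_unique hcop hβ0 (by positivity) hb1 (by positivity) hb2 hEqZ
    have : x = x' := by exact_mod_cast h1
    have : y = y' := by exact_mod_cast h2
    simp_all
  have hTsub : T ⊆ Gset := by
    intro t ht
    rw [hmemT] at ht
    obtain ⟨x, y, hx, hy, rfl⟩ := ht
    rw [hmemG]
    exact hfgap x y hx hy
  -- main set equality
  have hseteq : {n : ℕ | n ∉ Smod α β g} = ↑(Gset \ T) := by
    ext n
    simp only [Set.mem_setOf_eq, Finset.coe_sdiff, Set.mem_diff, Finset.mem_coe]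
    constructor
    · intro hn
      have hnS : n ∉ S α β := fun h => hn (Or.inl h)
      have hng : ¬ ∃ s ∈ S α β, n = g + s := fun h => hn (Or.inr h)
      refine ⟨(hmemG n).mpr hnS, fun hnT => ?_⟩
      rw [hmemT] at hnT
      obtain ⟨x, y, hx, hy, rfl⟩ := hnT
      exact hng ⟨x * α + y * β, ⟨x, y, rfl⟩, by ring⟩
    · rintro ⟨hnG, hnT⟩
      have hnS : n ∉ S α β := (hmemG n).mp hnG
      intro hmod
      rcases hmod with h | h
      · exact hnS h
      obtain ⟨s, hsS, rfl⟩ := h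
      obtain ⟨x, y, hx, hxβ, hxy⟩ := exists_rep hcop hβ0 (s : ℤ)
      have hy0 : 0 ≤ y := (mem_S_iff hcop hβ0 hx hxβ hxy).mp hsS
      have hcastn : ((g + s : ℕ) : ℤ) = (g : ℤ) + x * α + y * β := by push_cast; linarith
      have hxa : (x : ℤ) < a := by
        by_contra hxa
        push_neg at hxa
        refine hnS (mem_S_of_int (x := x - a) (y := y - b + α) (by linarith) (by omega) ?_)
        rw [hcastn, hgZ]; ring
      have hyb : y < (b : ℤ) := by
        by_contra hyb
        push_neg at hyb
        refine hnS (mem_S_of_int (x := (β : ℤ) - a + x) (y := y - b) (by omega) (by linarith) ?_)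
        rw [hcastn, hgZ]; ring
      apply hnT
      rw [hmemT]
      refine ⟨x.toNat, y.toNat, ?_, ?_, ?_⟩
      · have hh : (x.toNat : ℤ) < a := by rwa [Int.toNat_of_nonneg hx]
        exact_mod_cast hh
      · have hh : (y.toNat : ℤ) < b := by rwa [Int.toNat_of_nonneg hy0]
        exact_mod_cast hh
      · have hh : ((g + s : ℕ) : ℤ) = ((g + x.toNat * α + y.toNat * β : ℕ) : ℤ) := by
          push_cast [Int.toNat_of_nonneg hx, Int.toNat_of_nonneg hy0]
          linarith [hcastn]
        exact_mod_cast hh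
  rw [hseteq, Set.ncard_coe_finset, Finset.card_sdiff_of_subset hTsub, hTcard]
  omega
end

section
/- Let Γ = ⟨α, β⟩ with gcd(α,β)=1 and g = αβ − aα − bβ a gap (1 ≤ a ≤ β−1, 1 ≤ b ≤ α−1). Define W(g) = 2δ(Δ) − c(Δ), where Δ = Γ ∪ (Γ+g), c(Δ) is the conductor of Δ, and δ(Δ) = |{x ∈ Δ : x < c(Δ)}|. If αβ − bβ < αβ − aα (i.e., bβ > aα), then W(g) = 2ab − aα; otherwise W(g) = 2ab − bβ. -/
lemma memS (α β x y : ℕ) : x * α + y * β ∈ S α β := ⟨x, y, rfl⟩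

lemma S_comm (α β : ℕ) : S α β = S β α := by
  ext n
  constructor <;> rintro ⟨x, y, rfl⟩ <;> exact ⟨y, x, (add_comm _ _)⟩

lemma Smod_comm (α β g : ℕ) : Smod α β g = Smod β α g := by
  unfold Smod
  rw [S_comm]

lemma L2 (α β : ℕ) (hα : 0 < α) (hβ : 0 < β) (hcop : Nat.Coprime α β)
    (u w m : ℕ) (hu : u < β) (hw : 1 ≤ w) (he : u * α = m + w * β) :
    m ∉ S α β := by
  rintro ⟨x, y, rfl⟩
  have hx : x ≤ u := by
    by_contra h
    push_neg at h
    have : u * α < x * α := by exact Nat.mul_lt_mul_of_lt_of_le h (le_refl α) hα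
    omega
  have h1 : (u - x) * α = (y + w) * β := by
    have e1 : (u - x) * α + x * α = u * α := by rw [← add_mul]; congr 1; omega
    have e2 : (y + w) * β = y * β + w * β := by ring
    omega
  have hdvd : β ∣ (u - x) := by
    have : β ∣ (u - x) * α := ⟨y + w, by rw [h1]; ring⟩
    exact (Nat.Coprime.dvd_of_dvd_mul_right hcop.symm this)
  have hux : u - x = 0 := by
    by_contra h
    have := Nat.le_of_dvd (by omega) hdvd
    omega
  rw [hux, zero_mul] at h1
  have h3 : β ≤ w * β := by
    calc β = 1 * β := (one_mul β).symm
    _ ≤ w * β := Nat.mul_le_mul_right β hw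
  have h4 : (y + w) * β = y * β + w * β := by ring
  omega

lemma L4 (α β : ℕ) (hβ : 0 < β) (hcop : Nat.Coprime α β) (n : ℕ) :
    n ∈ S α β ∨ ∃ u w : ℕ, u < β ∧ 1 ≤ w ∧ n + w * β = u * α := by
  haveI : NeZero β := ⟨hβ.ne'⟩
  set v : (ZMod β)ˣ := ZMod.unitOfCoprime α hcop with hv
  set u : ℕ := ((v⁻¹ : (ZMod β)ˣ) * (n : ZMod β) : ZMod β).val with hu
  have hulb : u < β := ZMod.val_lt _
  have hmod : ((u * α : ℕ) : ZMod β) = (n : ZMod β) := by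
    push_cast
    rw [hu, ZMod.natCast_val, ZMod.cast_id]
    have hα : ((α : ZMod β)) = (v : ZMod β) := (ZMod.coe_unitOfCoprime α hcop).symm
    rw [hα]
    calc ((v⁻¹ : (ZMod β)ˣ) : ZMod β) * (n : ZMod β) * (v : ZMod β)
        = ((v⁻¹ : (ZMod β)ˣ) : ZMod β) * (v : ZMod β) * (n : ZMod β) := by ring
      _ = (n : ZMod β) := by rw [← Units.val_mul, inv_mul_cancel]; simp
  have hcong : u * α ≡ n [MOD β] := (ZMod.natCast_eq_natCast_iff _ _ _).mp hmod
  rcases le_or_gt (u * α) n with h | h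
  · left
    have hd : β ∣ n - u * α := (Nat.modEq_iff_dvd' h).mp hcong
    rcases hd with ⟨k, hk⟩
    have hk2 : n - u * α = k * β := by rw [hk]; exact mul_comm β k
    exact ⟨u, k, by omega⟩
  · right
    have hd : β ∣ u * α - n := (Nat.modEq_iff_dvd' h.le).mp hcong.symm
    rcases hd with ⟨k, hk⟩
    have hk2 : u * α - n = k * β := by rw [hk]; exact mul_comm β k
    have hk1 : 1 ≤ k := by
      rcases Nat.eq_zero_or_pos k with h0 | h0
      · rw [h0, zero_mul] at hk2; omega
      · exact h0
    refine ⟨u, k, hulb, hk1, by omega⟩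

lemma unique_rep_aux (α β : ℕ) (hα : 0 < α) (hβ : 0 < β) (hcop : Nat.Coprime α β)
    (x1 y1 x2 y2 : ℕ) (h1 : x1 < β) (h2 : x2 < β) (hle : x1 ≤ x2)
    (he : x1 * α + y1 * β = x2 * α + y2 * β) : x1 = x2 ∧ y1 = y2 := by
  have hx12 : x1 * α ≤ x2 * α := Nat.mul_le_mul_right α hle
  have hy21 : y2 ≤ y1 := by
    have : y2 * β ≤ y1 * β := by omega
    exact Nat.le_of_mul_le_mul_right this hβ
  have e1 : (x2 - x1) * α + x1 * α = x2 * α := by rw [← add_mul]; congr 1; omega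
  have e2 : (y1 - y2) * β + y2 * β = y1 * β := by rw [← add_mul]; congr 1; omega
  have e3 : (x2 - x1) * α = (y1 - y2) * β := by omega
  have hdvd : β ∣ (x2 - x1) :=
    Nat.Coprime.dvd_of_dvd_mul_right hcop.symm ⟨y1 - y2, by rw [e3]; ring⟩
  have hxx : x2 - x1 = 0 := by
    by_contra h
    have := Nat.le_of_dvd (by omega) hdvd
    omega
  have hx : x1 = x2 := by omega
  subst hx
  have : y1 * β = y2 * β := by omega
  exact ⟨rfl, Nat.eq_of_mul_eq_mul_right hβ this⟩

lemma unique_rep (α β : ℕ) (hα : 0 < α) (hβ : 0 < β) (hcop : Nat.Coprime α β)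
    (x1 y1 x2 y2 : ℕ) (h1 : x1 < β) (h2 : x2 < β)
    (he : x1 * α + y1 * β = x2 * α + y2 * β) : x1 = x2 ∧ y1 = y2 := by
  rcases le_total x1 x2 with h | h
  · exact unique_rep_aux α β hα hβ hcop x1 y1 x2 y2 h1 h2 h he
  · obtain ⟨u, v⟩ := unique_rep_aux α β hα hβ hcop x2 y2 x1 y1 h2 h1 h he.symm
    exact ⟨u.symm, v.symm⟩

section Main

variable (α β g a b : ℕ)

/-- Everything at or above the conductor is in Δ. -/
lemma A1lem (hα : 2 ≤ α) (hβ : 2 ≤ β) (hcop : Nat.Coprime α β)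
    (hrep : g + a * α + b * β = α * β) (ha1 : 1 ≤ a) (ha2 : a + 1 ≤ β)
    (hb1 : 1 ≤ b) (hb2 : b + 1 ≤ α) (hlt : a * α < b * β)
    (n : ℕ) (hn : (β - 1 - a) * α ≤ n + (β - 1)) : n ∈ Smod α β g := by
  rcases L4 α β (by omega) hcop n with h | ⟨u, w, hu, hw, he⟩
  · exact Or.inl h
  have hwβ : β ≤ w * β := by
    calc β = 1 * β := (one_mul β).symm
    _ ≤ w * β := Nat.mul_le_mul_right β hw
  have hua : β - a ≤ u := by
    by_contra hcon
    push_neg at hcon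
    have h1 : u * α ≤ (β - 1 - a) * α := Nat.mul_le_mul_right α (by omega)
    omega
  have hwb : w ≤ b := by
    by_contra hcon
    push_neg at hcon
    have h1 : u * α ≤ (β - 1) * α := Nat.mul_le_mul_right α (by omega)
    have h2 : (b + 1) * β ≤ w * β := Nat.mul_le_mul_right β (by omega)
    have e2 : (β - 1 - a) * α + a * α = (β - 1) * α := by rw [← add_mul]; congr 1; omega
    have e3 : (b + 1) * β = b * β + β := by ring
    omega
  right
  refine ⟨(u - (β - a)) * α + (b - w) * β, memS _ _ _ _, ?_⟩
  have e4 : (u - (β - a)) * α + (β - a) * α = u * α := by rw [← add_mul]; congr 1; omega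
  have e5 : (b - w) * β + w * β = b * β := by rw [← add_mul]; congr 1; omega
  have e6 : (β - a) * α + a * α = β * α := by rw [← add_mul]; congr 1; omega
  have e7 : β * α = α * β := mul_comm β α
  omega

/-- The element just below the conductor is not in Δ. -/
lemma A2lem (hα : 2 ≤ α) (hβ : 2 ≤ β) (hcop : Nat.Coprime α β)
    (hrep : g + a * α + b * β = α * β) (ha1 : 1 ≤ a) (ha2 : a + 1 ≤ β)
    (hb1 : 1 ≤ b) (hb2 : b + 1 ≤ α)
    (m : ℕ) (hm : m + β = (β - 1 - a) * α) : m ∉ Smod α β g := by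
  rintro (hS | ⟨s, ⟨x, y, rfl⟩, hgs⟩)
  · refine L2 α β (by omega) (by omega) hcop (β - 1 - a) 1 m (by omega) le_rfl ?_ hS
    have : (1 : ℕ) * β = β := one_mul β
    omega
  · have e8 : (β - 1 - a) * α + a * α + α = β * α := by
      have : ((β - 1 - a) + a + 1) * α = β * α := by congr 1; omega
      calc (β - 1 - a) * α + a * α + α = ((β - 1 - a) + a + 1) * α := by ring
      _ = β * α := this
    have e7 : β * α = α * β := mul_comm β α
    have e9 : (b - 1) * β + β = b * β := by
      have : ((b - 1) + 1) * β = b * β := by congr 1; omega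
      calc (b - 1) * β + β = ((b - 1) + 1) * β := by ring
      _ = b * β := this
    have e10 : (x + 1) * α = x * α + α := by ring
    have hkey : (b - 1) * β = y * β + (x + 1) * α := by omega
    exact L2 β α (by omega) (by omega) hcop.symm (b - 1) (x + 1) (y * β)
      (by omega) (by omega) hkey ⟨y, 0, by simp⟩

lemma semCond_eq (hα : 2 ≤ α) (hβ : 2 ≤ β) (hcop : Nat.Coprime α β)
    (hg : g ∉ S α β)
    (hrep : g + a * α + b * β = α * β) (ha1 : 1 ≤ a) (ha2 : a + 1 ≤ β)
    (hb1 : 1 ≤ b) (hb2 : b + 1 ≤ α) (hlt : a * α < b * β) :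
    semCond (Smod α β g) = (β - 1 - a) * α - (β - 1) := by
  have hg1 : 1 ≤ g := by
    rcases Nat.eq_zero_or_pos g with h | h
    · exact absurd (h ▸ (⟨0, 0, by simp⟩ : (0 : ℕ) ∈ S α β)) hg
    · exact h
  have h2a : 2 * a < β := by
    have e1 : 2 * a * α = a * α + a * α := by ring
    have h1 : 2 * a * α < β * α := by
      have e7 : β * α = α * β := mul_comm β α
      omega
    exact Nat.lt_of_mul_lt_mul_right h1
  have hCge : β - 1 ≤ (β - 1 - a) * α := by
    have h3 : (β - 1 - a) * 2 ≤ (β - 1 - a) * α := Nat.mul_le_mul_left _ hα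
    have h4 : (β - 1 - a) * 2 = 2 * (β - 1 - a) := mul_comm _ _
    omega
  have hCset : (β - 1 - a) * α - (β - 1) ∈ {c | ∀ n, c ≤ n → n ∈ Smod α β g} := by
    intro n hn
    exact A1lem α β g a b hα hβ hcop hrep ha1 ha2 hb1 hb2 hlt n (by omega)
  unfold semCond
  apply le_antisymm
  · exact Nat.sInf_le hCset
  · by_contra hcon
    push_neg at hcon
    have hne : {c | ∀ n, c ≤ n → n ∈ Smod α β g}.Nonempty := ⟨_, hCset⟩
    have hmem := Nat.sInf_mem hne
    have h1 : (β - 1 - a) * α - (β - 1) - 1 ∈ Smod α β g := hmem _ (by omega)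
    exact A2lem α β g a b hα hβ hcop hrep ha1 ha2 hb1 hb2 _ (by omega) h1



/-- Sylvester-type symmetry: exactly half the box lies under the diagonal. -/
lemma T_count (hα : 2 ≤ α) (hβ : 2 ≤ β) (hcop : Nat.Coprime α β) :
    2 * (((Finset.Ico 1 β) ×ˢ (Finset.Ico 1 α)).filter
        (fun p => p.1 * α + p.2 * β < α * β)).card = (β - 1) * (α - 1) := by
  classical
  have noeq : ∀ p ∈ (Finset.Ico 1 β) ×ˢ (Finset.Ico 1 α),
      p.1 * α + p.2 * β ≠ α * β := by
    rintro ⟨x, y⟩ hp heq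
    simp only [Finset.mem_product, Finset.mem_Ico] at hp
    obtain ⟨⟨hx1, hx2⟩, hy1, hy2⟩ := hp
    dsimp only at heq
    have e1 : (α - y) * β + y * β = α * β := by rw [← add_mul]; congr 1; omega
    have e3 : x * α = (α - y) * β := by omega
    have hdvd : β ∣ x :=
      Nat.Coprime.dvd_of_dvd_mul_right hcop.symm ⟨α - y, by rw [e3]; ring⟩
    have := Nat.le_of_dvd (by omega) hdvd
    omega
  have hbij : (((Finset.Ico 1 β) ×ˢ (Finset.Ico 1 α)).filter
        (fun p => p.1 * α + p.2 * β < α * β)).card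
      = (((Finset.Ico 1 β) ×ˢ (Finset.Ico 1 α)).filter
        (fun p => ¬(p.1 * α + p.2 * β < α * β))).card := by
    apply Finset.card_bij (fun p _ => (β - p.1, α - p.2))
    · rintro ⟨x, y⟩ hp
      simp only [Finset.mem_filter, Finset.mem_product, Finset.mem_Ico] at hp ⊢
      obtain ⟨⟨⟨hx1, hx2⟩, hy1, hy2⟩, hlt⟩ := hp
      have e1 : (β - x) * α + x * α = β * α := by rw [← add_mul]; congr 1; omega
      have e2 : (α - y) * β + y * β = α * β := by rw [← add_mul]; congr 1; omega
      have e7 : β * α = α * β := mul_comm β α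
      exact ⟨⟨⟨by omega, by omega⟩, by omega, by omega⟩, by omega⟩
    · rintro ⟨x1, y1⟩ hp1 ⟨x2, y2⟩ hp2 heq
      simp only [Finset.mem_filter, Finset.mem_product, Finset.mem_Ico] at hp1 hp2
      simp only [Prod.mk.injEq] at heq ⊢
      constructor <;> omega
    · rintro ⟨x, y⟩ hp
      simp only [Finset.mem_filter, Finset.mem_product, Finset.mem_Ico] at hp
      obtain ⟨⟨⟨hx1, hx2⟩, hy1, hy2⟩, hge⟩ := hp
      have hne := noeq (x, y) (by
        simp only [Finset.mem_product, Finset.mem_Ico]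
        exact ⟨⟨hx1, hx2⟩, hy1, hy2⟩)
      refine ⟨(β - x, α - y), ?_, ?_⟩
      · dsimp only at hne
        simp only [Finset.mem_filter, Finset.mem_product, Finset.mem_Ico]
        have e1 : (β - x) * α + x * α = β * α := by rw [← add_mul]; congr 1; omega
        have e2 : (α - y) * β + y * β = α * β := by rw [← add_mul]; congr 1; omega
        have e7 : β * α = α * β := mul_comm β α
        exact ⟨⟨⟨by omega, by omega⟩, by omega, by omega⟩, by omega⟩
      · simp only [Prod.mk.injEq]
        constructor <;> omega
  have hsplit := Finset.card_filter_add_card_filter_not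
    (s := (Finset.Ico 1 β) ×ˢ (Finset.Ico 1 α))
    (p := fun p => p.1 * α + p.2 * β < α * β)
  have hboxcard : ((Finset.Ico 1 β) ×ˢ (Finset.Ico 1 α)).card = (β - 1) * (α - 1) := by
    rw [Finset.card_product, Nat.card_Ico, Nat.card_Ico]
  omega

lemma gap_card (hα : 2 ≤ α) (hβ : 2 ≤ β) (hcop : Nat.Coprime α β) (hg : g ∉ S α β)
    (hrep : g + a * α + b * β = α * β) (ha1 : 1 ≤ a) (ha2 : a + 1 ≤ β)
    (hb1 : 1 ≤ b) (hb2 : b + 1 ≤ α) (hlt : a * α < b * β)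
    [DecidablePred (· ∈ Smod α β g)] :
    (((Finset.Ico 1 β) ×ˢ (Finset.Ico 1 α)).filter
        (fun p => p.1 * α + p.2 * β < α * β ∧ (a < p.1 ∨ b < p.2))).card
    = ((Finset.range ((β - 1 - a) * α - (β - 1))).filter
        (fun n => n ∉ Smod α β g)).card := by
  have hg1 : 1 ≤ g := by
    rcases Nat.eq_zero_or_pos g with h | h
    · exact absurd (h ▸ (⟨0, 0, by simp⟩ : (0 : ℕ) ∈ S α β)) hg
    · exact h
  have h2a : 2 * a < β := by
    have e1 : 2 * a * α = a * α + a * α := by ring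
    have h1 : 2 * a * α < β * α := by
      have e7 : β * α = α * β := mul_comm β α
      omega
    exact Nat.lt_of_mul_lt_mul_right h1
  have hCge : β - 1 ≤ (β - 1 - a) * α := by
    have h3 : (β - 1 - a) * 2 ≤ (β - 1 - a) * α := Nat.mul_le_mul_left _ hα
    have h4 : (β - 1 - a) * 2 = 2 * (β - 1 - a) := mul_comm _ _
    omega
  have hzero : (0 : ℕ) ∈ Smod α β g := Or.inl ⟨0, 0, by simp⟩
  apply Finset.card_bij (fun p _ => α * β - (p.1 * α + p.2 * β))
  · rintro ⟨x, y⟩ hp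
    simp only [Finset.mem_filter, Finset.mem_product, Finset.mem_Ico] at hp
    obtain ⟨⟨⟨hx1, hx2⟩, hy1, hy2⟩, hsum, hq⟩ := hp
    have hnot : α * β - (x * α + y * β) ∉ Smod α β g := by
      rintro (hS | ⟨s, ⟨x', y', rfl⟩, hgs⟩)
      · refine L2 α β (by omega) (by omega) hcop (β - x) y _ (by omega) (by omega) ?_ hS
        have e1 : (β - x) * α + x * α = β * α := by rw [← add_mul]; congr 1; omega
        have e7 : β * α = α * β := mul_comm β α
        omega
      · have hstar : x' * α + y' * β + x * α + y * β = a * α + b * β := by omega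
        by_cases hax : a < x
        · by_cases hby : y ≤ b
          · have e11 : (b - y) * β + y * β = b * β := by rw [← add_mul]; congr 1; omega
            have e12 : (x - a + x') * α + a * α = x * α + x' * α := by
              rw [← add_mul, ← add_mul]; congr 1; omega
            have hkey2 : (b - y) * β = y' * β + (x - a + x') * α := by omega
            exact L2 β α (by omega) (by omega) hcop.symm (b - y) (x - a + x') (y' * β)
              (by omega) (by omega) hkey2 ⟨y', 0, by simp⟩
          · push_neg at hby
            have h1 : (a + 1) * α ≤ x * α := Nat.mul_le_mul_right α (by omega)
            have h2 : (b + 1) * β ≤ y * β := Nat.mul_le_mul_right β (by omega)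
            have e13 : (a + 1) * α = a * α + α := by ring
            have e14 : (b + 1) * β = b * β + β := by ring
            omega
        · push_neg at hax
          have hby : b < y := by rcases hq with h | h; · omega
                                 · exact h
          have e15 : (a - x) * α + x * α = a * α := by rw [← add_mul]; congr 1; omega
          have e16 : (y - b + y') * β + b * β = y * β + y' * β := by
            rw [← add_mul, ← add_mul]; congr 1; omega
          have hkey3 : (a - x) * α = x' * α + (y - b + y') * β := by omega
          exact L2 α β (by omega) (by omega) hcop (a - x) (y - b + y') (x' * α)
            (by omega) (by omega) hkey3 ⟨x', 0, by simp⟩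
    have hnC : α * β - (x * α + y * β) < (β - 1 - a) * α - (β - 1) := by
      by_contra hcon
      push_neg at hcon
      exact hnot (A1lem α β g a b hα hβ hcop hrep ha1 ha2 hb1 hb2 hlt _ (by omega))
    simp only [Finset.mem_filter, Finset.mem_range]
    exact ⟨hnC, hnot⟩
  · rintro ⟨x1, y1⟩ hp1 ⟨x2, y2⟩ hp2 heq
    simp only [Finset.mem_filter, Finset.mem_product, Finset.mem_Ico] at hp1 hp2
    dsimp only at heq
    have hsums : x1 * α + y1 * β = x2 * α + y2 * β := by omega
    obtain ⟨u, v⟩ := unique_rep α β (by omega) (by omega) hcop x1 y1 x2 y2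
      (by omega) (by omega) hsums
    simp only [Prod.mk.injEq]
    exact ⟨u, v⟩
  · intro n hn
    simp only [Finset.mem_filter, Finset.mem_range] at hn
    obtain ⟨hnC, hnot⟩ := hn
    have hnS : n ∉ S α β := fun h => hnot (Or.inl h)
    rcases L4 α β (by omega) hcop n with h | ⟨u, w, hu, hw, he⟩
    · exact absurd h hnS
    have hwβ : β ≤ w * β := by
      calc β = 1 * β := (one_mul β).symm
      _ ≤ w * β := Nat.mul_le_mul_right β hw
    have hu1 : 1 ≤ u := by
      rcases Nat.eq_zero_or_pos u with h0 | h0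
      · rw [h0, zero_mul] at he; omega
      · exact h0
    have hn0 : 1 ≤ n := by
      rcases Nat.eq_zero_or_pos n with h0 | h0
      · rw [h0] at hnot; exact absurd hzero hnot
      · exact h0
    have hwα : w < α := by
      by_contra hcon
      push_neg at hcon
      have h1 : α * β ≤ w * β := Nat.mul_le_mul_right β hcon
      have h2 : u * α ≤ (β - 1) * α := Nat.mul_le_mul_right α (by omega)
      have e1 : (β - 1) * α + α = β * α := by
        have : ((β - 1) + 1) * α = β * α := by congr 1; omega
        calc (β - 1) * α + α = ((β - 1) + 1) * α := by ring
        _ = β * α := this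
      have e7 : β * α = α * β := mul_comm β α
      omega
    have e1 : (β - u) * α + u * α = β * α := by rw [← add_mul]; congr 1; omega
    have e7 : β * α = α * β := mul_comm β α
    refine ⟨(β - u, w), ?_, ?_⟩
    · simp only [Finset.mem_filter, Finset.mem_product, Finset.mem_Ico]
      refine ⟨⟨⟨by omega, by omega⟩, by omega, by omega⟩, by omega, ?_⟩
      by_contra hq2
      push_neg at hq2
      obtain ⟨hq1, hq2⟩ := hq2
      apply hnot
      right
      refine ⟨(u - (β - a)) * α + (b - w) * β, memS _ _ _ _, ?_⟩
      have e4 : (u - (β - a)) * α + (β - a) * α = u * α := by rw [← add_mul]; congr 1; omega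
      have e5 : (b - w) * β + w * β = b * β := by rw [← add_mul]; congr 1; omega
      have e6 : (β - a) * α + a * α = β * α := by rw [← add_mul]; congr 1; omega
      omega
    · dsimp only
      omega

lemma pairs_split (ha1 : 1 ≤ a) (hb1 : 1 ≤ b) (ha2 : a + 1 ≤ β) (hb2 : b + 1 ≤ α)
    (hab : a * α + b * β < α * β) :
    (((Finset.Ico 1 β) ×ˢ (Finset.Ico 1 α)).filter
        (fun p => p.1 * α + p.2 * β < α * β ∧ (a < p.1 ∨ b < p.2))).card + a * b
    = (((Finset.Ico 1 β) ×ˢ (Finset.Ico 1 α)).filter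
        (fun p => p.1 * α + p.2 * β < α * β)).card := by
  classical
  have hff : ((((Finset.Ico 1 β) ×ˢ (Finset.Ico 1 α)).filter
        (fun p => p.1 * α + p.2 * β < α * β)).filter (fun p => a < p.1 ∨ b < p.2))
      = (((Finset.Ico 1 β) ×ˢ (Finset.Ico 1 α)).filter
        (fun p => p.1 * α + p.2 * β < α * β ∧ (a < p.1 ∨ b < p.2))) :=
    Finset.filter_filter _ _ _
  have hneg : ((((Finset.Ico 1 β) ×ˢ (Finset.Ico 1 α)).filter
        (fun p => p.1 * α + p.2 * β < α * β)).filter (fun p => ¬(a < p.1 ∨ b < p.2)))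
      = (Finset.Ico 1 (a + 1)) ×ˢ (Finset.Ico 1 (b + 1)) := by
    ext ⟨x, y⟩
    simp only [Finset.mem_filter, Finset.mem_product, Finset.mem_Ico, not_or, not_lt]
    constructor
    · rintro ⟨⟨⟨⟨hx1, hx2⟩, hy1, hy2⟩, hs⟩, hxa, hyb⟩
      exact ⟨⟨hx1, by omega⟩, hy1, by omega⟩
    · rintro ⟨⟨hx1, hx2⟩, hy1, hy2⟩
      have h1 : x * α ≤ a * α := Nat.mul_le_mul_right α (by omega)
      have h2 : y * β ≤ b * β := Nat.mul_le_mul_right β (by omega)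
      exact ⟨⟨⟨⟨hx1, by omega⟩, hy1, by omega⟩, by omega⟩, by omega, by omega⟩
  have hsum := Finset.card_filter_add_card_filter_not
    (s := ((Finset.Ico 1 β) ×ˢ (Finset.Ico 1 α)).filter
        (fun p => p.1 * α + p.2 * β < α * β))
    (p := fun p => a < p.1 ∨ b < p.2)
  rw [hff, hneg] at hsum
  rw [Finset.card_product, Nat.card_Ico, Nat.card_Ico] at hsum
  have : a + 1 - 1 = a := by omega
  rw [this] at hsum
  have : b + 1 - 1 = b := by omega
  rw [this] at hsum
  exact hsum

lemma main (hα : 2 ≤ α) (hβ : 2 ≤ β) (hcop : Nat.Coprime α β) (hg : g ∉ S α β)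
    (hrep : g + a * α + b * β = α * β) (ha1 : 1 ≤ a) (ha2 : a + 1 ≤ β)
    (hb1 : 1 ≤ b) (hb2 : b + 1 ≤ α) (hlt : a * α < b * β) :
    W α β g = 2 * (a : ℤ) * (b : ℤ) - (a : ℤ) * (α : ℤ) := by
  classical
  have hg1 : 1 ≤ g := by
    rcases Nat.eq_zero_or_pos g with h | h
    · exact absurd (h ▸ (⟨0, 0, by simp⟩ : (0 : ℕ) ∈ S α β)) hg
    · exact h
  have hab : a * α + b * β < α * β := by omega
  have h2a : 2 * a < β := by
    have e1 : 2 * a * α = a * α + a * α := by ring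
    have h1 : 2 * a * α < β * α := by
      have e7 : β * α = α * β := mul_comm β α
      omega
    exact Nat.lt_of_mul_lt_mul_right h1
  have hCge : β - 1 ≤ (β - 1 - a) * α := by
    have h3 : (β - 1 - a) * 2 ≤ (β - 1 - a) * α := Nat.mul_le_mul_left _ hα
    have h4 : (β - 1 - a) * 2 = 2 * (β - 1 - a) := mul_comm _ _
    omega
  have hcond := semCond_eq α β g a b hα hβ hcop hg hrep ha1 ha2 hb1 hb2 hlt
  have hδ : semDelta (Smod α β g)
      = ((Finset.range ((β - 1 - a) * α - (β - 1))).filter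
          (fun n => n ∈ Smod α β g)).card := by
    unfold semDelta
    rw [hcond]
    have hset : {x | x ∈ Smod α β g ∧ x < (β - 1 - a) * α - (β - 1)}
        = ↑((Finset.range ((β - 1 - a) * α - (β - 1))).filter
            (fun n => n ∈ Smod α β g)) := by
      ext x
      simp only [Set.mem_setOf_eq, Finset.coe_filter, Finset.mem_range]
      tauto
    rw [hset, Set.ncard_coe_finset]
  have hDG : ((Finset.range ((β - 1 - a) * α - (β - 1))).filter
        (fun n => n ∈ Smod α β g)).card
      + ((Finset.range ((β - 1 - a) * α - (β - 1))).filter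
        (fun n => n ∉ Smod α β g)).card = (β - 1 - a) * α - (β - 1) := by
    have := Finset.card_filter_add_card_filter_not
      (s := Finset.range ((β - 1 - a) * α - (β - 1)))
      (p := fun n => n ∈ Smod α β g)
    simpa using this
  have hGF := gap_card α β g a b hα hβ hcop hg hrep ha1 ha2 hb1 hb2 hlt
  have hPS := pairs_split α β a b ha1 hb1 ha2 hb2 hab
  have hT := T_count α β hα hβ hcop
  -- cast everything to ℤ
  have hCcast : (((β - 1 - a) * α - (β - 1) : ℕ) : ℤ)
      = ((β : ℤ) - 1 - a) * α - ((β : ℤ) - 1) := by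
    rw [Nat.cast_sub hCge, Nat.cast_mul, Nat.cast_sub (show a ≤ β - 1 by omega),
      Nat.cast_sub (show 1 ≤ β by omega), Nat.cast_one]
  have r1 : (((Finset.range ((β - 1 - a) * α - (β - 1))).filter
        (fun n => n ∈ Smod α β g)).card : ℤ)
      + (((Finset.range ((β - 1 - a) * α - (β - 1))).filter
        (fun n => n ∉ Smod α β g)).card : ℤ)
      = ((β : ℤ) - 1 - a) * α - ((β : ℤ) - 1) := by
    rw [← hCcast]
    exact_mod_cast hDG
  have r2 : ((((Finset.Ico 1 β) ×ˢ (Finset.Ico 1 α)).filter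
        (fun p => p.1 * α + p.2 * β < α * β ∧ (a < p.1 ∨ b < p.2))).card : ℤ)
      = (((Finset.range ((β - 1 - a) * α - (β - 1))).filter
        (fun n => n ∉ Smod α β g)).card : ℤ) := by exact_mod_cast hGF
  have r3 : ((((Finset.Ico 1 β) ×ˢ (Finset.Ico 1 α)).filter
        (fun p => p.1 * α + p.2 * β < α * β ∧ (a < p.1 ∨ b < p.2))).card : ℤ)
      + (a : ℤ) * b
      = ((((Finset.Ico 1 β) ×ˢ (Finset.Ico 1 α)).filter
        (fun p => p.1 * α + p.2 * β < α * β)).card : ℤ) := by exact_mod_cast hPS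
  have r4 : 2 * ((((Finset.Ico 1 β) ×ˢ (Finset.Ico 1 α)).filter
        (fun p => p.1 * α + p.2 * β < α * β)).card : ℤ)
      = ((β : ℤ) - 1) * ((α : ℤ) - 1) := by
    have hcast2 : (((β - 1) * (α - 1) : ℕ) : ℤ) = ((β : ℤ) - 1) * ((α : ℤ) - 1) := by
      rw [Nat.cast_mul, Nat.cast_sub (show 1 ≤ β by omega),
        Nat.cast_sub (show 1 ≤ α by omega), Nat.cast_one]
    rw [← hcast2]
    exact_mod_cast hT
  unfold W
  rw [hcond, hδ, hCcast]
  linarith [r1, r2, r3, r4,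
    (by ring : ((β : ℤ) - 1 - a) * α - ((β : ℤ) - 1)
      = ((β : ℤ) - 1) * ((α : ℤ) - 1) - (a : ℤ) * α)]

lemma W_comm (α β g : ℕ) : W β α g = W α β g := by
  unfold W
  rw [← Smod_comm]

theorem stmt8 (α β g a b : ℕ) (hα : 0 < α) (hαβ : α < β) (hcop : Nat.Coprime α β)
    (hg : g ∉ S α β) (ha1 : 1 ≤ a) (ha2 : a ≤ β - 1) (hb1 : 1 ≤ b) (hb2 : b ≤ α - 1)
    (hrep : g + a * α + b * β = α * β) :
    (a * α < b * β → W α β g = 2 * (a : ℤ) * (b : ℤ) - (a : ℤ) * (α : ℤ)) ∧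
    (b * β < a * α → W α β g = 2 * (a : ℤ) * (b : ℤ) - (b : ℤ) * (β : ℤ)) := by
  have hα2 : 2 ≤ α := by omega
  have hβ2 : 2 ≤ β := by omega
  constructor
  · intro h
    exact main α β g a b hα2 hβ2 hcop hg hrep ha1 (by omega) hb1 (by omega) h
  · intro h
    have hg' : g ∉ S β α := by rw [← S_comm]; exact hg
    have hrep' : g + b * β + a * α = β * α := by
      have e7 : β * α = α * β := mul_comm β α
      omega
    have := main β α g b a hβ2 hα2 hcop.symm hg' hrep' hb1 (by omega) ha1 (by omega) h
    rw [W_comm] at this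
    rw [this]
    ring
end Main
end

section
/- Let Γ = ⟨α, β⟩ with gcd(α,β)=1 and g = αβ − aα − bβ a gap (1 ≤ a ≤ β−1, 1 ≤ b ≤ α−1). Then W(g) = 0 if and only if α = 2b or β = 2a. -/
section Helpers

lemma semCond_gap (Δ : Set ℕ) (E : Finset ℕ) (hE : ∀ n, n ∈ Δ ↔ n ∉ E) (h : E.Nonempty) :
    semCond Δ = E.max' h + 1 := by
  have hmem : (E.max' h + 1) ∈ {c | ∀ n, c ≤ n → n ∈ Δ} := by
    intro n hn
    rw [hE]
    intro hnE
    exact absurd (E.le_max' n hnE) (by omega)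
  refine le_antisymm (Nat.sInf_le hmem) ?_
  by_contra hlt
  push_neg at hlt
  rw [semCond] at hlt
  have h2 : E.max' h ∈ Δ := (Nat.sInf_mem ⟨_, hmem⟩) _ (by omega)
  exact (hE _).1 h2 (E.max'_mem h)

lemma semCond_univ (Δ : Set ℕ) (hE : ∀ n, n ∈ Δ) : semCond Δ = 0 :=
  Nat.sInf_eq_zero.2 (Or.inl fun n _ => hE n)

lemma semDelta_gap (Δ : Set ℕ) (E : Finset ℕ) (hE : ∀ n, n ∈ Δ ↔ n ∉ E)
    (hsub : E ⊆ Finset.range (semCond Δ)) :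
    semDelta Δ = semCond Δ - E.card := by
  have hset : {x ∈ Δ | x < semCond Δ} = ↑(Finset.range (semCond Δ) \ E) := by
    ext x
    simp only [Set.mem_setOf_eq, Finset.coe_sdiff, Set.mem_diff, Finset.mem_coe,
      Finset.mem_range, hE]
    tauto
  rw [semDelta, hset, Set.ncard_coe_finset, Finset.card_sdiff_of_subset hsub, Finset.card_range]

lemma mem_S_canon {α β n : ℕ} (hβ : 0 < β) (h : n ∈ S α β) :
    ∃ x y, x < β ∧ n = x * α + y * β := by
  obtain ⟨x', y', h⟩ := h
  have hqr : x' = β * (x' / β) + x' % β := (Nat.div_add_mod x' β).symm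
  refine ⟨x' % β, y' + (x' / β) * α, Nat.mod_lt _ hβ, ?_⟩
  calc n = x' * α + y' * β := h
    _ = (β * (x' / β) + x' % β) * α + y' * β := by rw [← hqr]
    _ = x' % β * α + (y' + x' / β * α) * β := by ring

lemma cancel_le {α β x x' u u' : ℕ} (hcop : Nat.Coprime α β) (hβ : 0 < β)
    (hx : x < β) (hx' : x' < β) (hle : x ≤ x')
    (heq : x * α + u * β = x' * α + u' * β) : x = x' := by
  by_contra hne
  have hd1 : 1 ≤ x' - x := by omega
  have hexp : x' * α = x * α + (x' - x) * α := by
    rw [← Nat.add_mul]; congr 1; omega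
  have huu : u' ≤ u := by nlinarith
  have hexp2 : u * β = u' * β + (u - u') * β := by
    rw [← Nat.add_mul]; congr 1; omega
  have hdvd : β ∣ (x' - x) * α := ⟨u - u', by rw [mul_comm β _]; omega⟩
  have hdvd2 : β ∣ (x' - x) := Nat.Coprime.dvd_of_dvd_mul_right hcop.symm hdvd
  have := Nat.le_of_dvd (by omega) hdvd2
  omega

lemma cancel {α β x x' u u' : ℕ} (hcop : Nat.Coprime α β) (hβ : 0 < β)
    (hx : x < β) (hx' : x' < β)
    (heq : x * α + u * β = x' * α + u' * β) : x = x' ∧ u = u' := by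
  have hxx : x = x' := by
    rcases le_total x x' with h | h
    · exact cancel_le hcop hβ hx hx' h heq
    · exact (cancel_le hcop hβ hx' hx h heq.symm).symm
  subst hxx
  have huβ : u * β = u' * β := by omega
  exact ⟨rfl, Nat.eq_of_mul_eq_mul_right hβ huβ⟩

lemma exists_canon {α β : ℕ} (hβ : 0 < β) (hcop : Nat.Coprime α β) (n : ℕ) :
    ∃ x, x < β ∧ x * α % β = n % β := by
  haveI : NeZero β := ⟨hβ.ne'⟩
  refine ⟨((n : ZMod β) * (α : ZMod β)⁻¹).val, ZMod.val_lt _, ?_⟩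
  have hunit : IsUnit (α : ZMod β) := (ZMod.isUnit_iff_coprime α β).2 hcop
  have : ((((n : ZMod β) * (α : ZMod β)⁻¹).val * α : ℕ) : ZMod β) = ((n : ℕ) : ZMod β) := by
    push_cast
    rw [ZMod.natCast_val, ZMod.cast_id]
    rw [mul_assoc, ZMod.inv_mul_of_unit _ hunit, mul_one]
  exact (ZMod.natCast_eq_natCast_iff' _ _ _).1 this

lemma notS_iff {α β : ℕ} (hα : 0 < α) (hβ : 0 < β) (hcop : Nat.Coprime α β) (n : ℕ) :
    n ∉ S α β ↔ ∃ x v, x < β ∧ 1 ≤ v ∧ n + v * β = x * α := by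
  constructor
  · intro hn
    obtain ⟨x, hx, hmod⟩ := exists_canon hβ hcop n
    by_cases hle : x * α ≤ n
    · exfalso
      apply hn
      have hdvd : β ∣ n - x * α :=
        Nat.dvd_of_mod_eq_zero (Nat.sub_mod_eq_zero_of_mod_eq hmod.symm)
      exact ⟨x, (n - x*α)/β, by rw [Nat.div_mul_cancel hdvd]; omega⟩
    · push_neg at hle
      have hdvd : β ∣ x * α - n :=
        Nat.dvd_of_mod_eq_zero (Nat.sub_mod_eq_zero_of_mod_eq hmod)
      refine ⟨x, (x*α - n)/β, hx, ?_, by rw [Nat.div_mul_cancel hdvd]; omega⟩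
      have hpos : 0 < x*α - n := by omega
      have := Nat.div_pos (Nat.le_of_dvd hpos hdvd) hβ
      omega
  · rintro ⟨x, v, hx, hv, heq⟩ hS
    obtain ⟨x', y', hx', hrep⟩ := mem_S_canon hβ hS
    have heq2 : x' * α + (y' + v) * β = x * α + 0 * β := by
      have h1 : (y' + v) * β = y' * β + v * β := by ring
      have h2 : 0 * β = 0 := by ring
      omega
    obtain ⟨h1, h2⟩ := cancel hcop hβ hx' hx heq2
    omega

lemma notSmod_iff {α β g a b : ℕ} (hα : 0 < α) (hβ : 0 < β) (hcop : Nat.Coprime α β)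
    (ha2 : a + 1 ≤ β) (hb2 : b + 1 ≤ α)
    (hrep : g + a * α + b * β = α * β) (n : ℕ) :
    n ∉ Smod α β g ↔ ∃ x v, x < β ∧ 1 ≤ v ∧ ¬(β - a ≤ x ∧ v ≤ b) ∧ n + v * β = x * α := by
  constructor
  · intro hn
    have hnS : n ∉ S α β := fun h => hn (Or.inl h)
    have hngS : ¬ ∃ s ∈ S α β, n = g + s := fun h => hn (Or.inr h)
    obtain ⟨x, v, hx, hv, heq⟩ := (notS_iff hα hβ hcop n).1 hnS
    refine ⟨x, v, hx, hv, ?_, heq⟩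
    rintro ⟨hbx, hbv⟩
    apply hngS
    refine ⟨(x + a - β) * α + (b - v) * β, ⟨_, _, rfl⟩, ?_⟩
    have hE1 : (x + a - β) * α + β * α = x * α + a * α := by
      rw [← Nat.add_mul, ← Nat.add_mul]; congr 1; omega
    have hE2 : (b - v) * β + v * β = b * β := by
      rw [← Nat.add_mul]; congr 1; omega
    have hE3 : α * β = β * α := mul_comm _ _
    omega
  · rintro ⟨x, v, hx, hv, hnb, heq⟩ (hS | ⟨s, hs, rfl⟩)
    · exact (notS_iff hα hβ hcop n).2 ⟨x, v, hx, hv, heq⟩ hS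
    · obtain ⟨x', y', hx', rfl⟩ := mem_S_canon hβ hs
      obtain ⟨k, w, hw, hX⟩ : ∃ k w, w < β ∧ x' + (β - a) = β * k + w :=
        ⟨(x' + (β - a)) / β, (x' + (β - a)) % β, Nat.mod_lt _ hβ,
          (Nat.div_add_mod _ β).symm⟩
      have hmaster : w * α + (k * α + y' + v) * β = x * α + b * β := by
        have hE0 : (x' + (β - a)) * α = x' * α + (β - a) * α := Nat.add_mul _ _ _
        have hE1 : (β - a) * α + a * α = β * α := by
          rw [← Nat.add_mul]; congr 1; omega
        have hE2 : (x' + (β - a)) * α = β * k * α + w * α := by rw [hX, Nat.add_mul]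
        have hE3 : β * k * α = k * α * β := by ring
        have hE4 : (k * α + y' + v) * β = k * α * β + y' * β + v * β := by ring
        have hE5 : α * β = β * α := mul_comm _ _
        omega
      obtain ⟨hwx, hU⟩ := cancel hcop hβ hw hx hmaster
      have hk0 : k = 0 := by
        by_contra hk
        have : α ≤ k * α := Nat.le_mul_of_pos_left α (by omega)
        omega
      rw [hk0] at hU hX
      simp only [Nat.zero_mul, Nat.mul_zero, Nat.zero_add, Nat.add_zero] at hU hX
      exact hnb ⟨by omega, by omega⟩

lemma sylv_term {α β x : ℕ} (hα : 0 < α) (hcop : Nat.Coprime α β)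
    (hx1 : 1 ≤ x) (hx2 : x < β) : x * α / β + (β - x) * α / β = α - 1 := by
  have hβ : 0 < β := by omega
  have hnd : ¬ β ∣ x * α := by
    intro hd
    have h2 := Nat.Coprime.dvd_of_dvd_mul_right hcop.symm hd
    have := Nat.le_of_dvd (by omega) h2
    omega
  obtain ⟨q, hq_eq⟩ : ∃ q, x * α / β = q := ⟨_, rfl⟩
  obtain ⟨r, hr_eq⟩ : ∃ r, x * α % β = r := ⟨_, rfl⟩
  have hqr : β * q + r = x * α := by rw [← hq_eq, ← hr_eq]; exact Nat.div_add_mod _ _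
  have hr2 : r < β := hr_eq ▸ Nat.mod_lt _ hβ
  have hr1 : 1 ≤ r := by
    rcases Nat.eq_zero_or_pos r with h | h
    · exact absurd ⟨q, by omega⟩ hnd
    · omega
  have hq : q < α := by
    have h2 : x * α < β * α := mul_lt_mul_of_pos_right hx2 hα
    have h3 : β * q < β * α := by omega
    exact Nat.lt_of_mul_lt_mul_left h3
  have hkey : (β - x) * α = β * (α - 1 - q) + (β - r) := by
    have hE1 : (β - x) * α + x * α = β * α := by
      rw [← Nat.add_mul]; congr 1; omega
    have hE2 : β * (α - 1 - q) + β * (q + 1) = β * α := by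
      rw [← Nat.mul_add]; congr 1; omega
    have hE3 : β * (q + 1) = β * q + β := by ring
    omega
  rw [hq_eq, hkey, Nat.mul_add_div hβ, Nat.div_eq_of_lt (by omega)]
  omega

lemma sylvester {α β : ℕ} (hα : 0 < α) (hαβ : α < β) (hcop : Nat.Coprime α β) :
    2 * ∑ x ∈ Finset.range β, x * α / β = (α - 1) * (β - 1) := by
  have hβ : 0 < β := by omega
  have h0 : ∑ x ∈ Finset.range β, x * α / β = ∑ x ∈ Finset.Ico 1 β, x * α / β := by
    rw [Finset.range_eq_Ico, ← Finset.sum_Ico_consecutive _ (Nat.zero_le 1) (by omega : 1 ≤ β)]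
    simp
  have hrefl : ∑ x ∈ Finset.Ico 1 β, (β - x) * α / β = ∑ x ∈ Finset.Ico 1 β, x * α / β := by
    refine Finset.sum_nbij' (fun x => β - x) (fun x => β - x) ?_ ?_ ?_ ?_ ?_
    · intro a ha; simp only [Finset.mem_Ico] at *; omega
    · intro a ha; simp only [Finset.mem_Ico] at *; omega
    · intro a ha; simp only [Finset.mem_Ico] at ha; show β - (β - a) = a; omega
    · intro a ha; simp only [Finset.mem_Ico] at ha; show β - (β - a) = a; omega
    · intro a ha; rfl
  rw [h0, two_mul]
  nth_rewrite 2 [← hrefl]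
  rw [← Finset.sum_add_distrib]
  rw [Finset.sum_congr rfl (fun x hx => by
    simp only [Finset.mem_Ico] at hx
    exact sylv_term hα hcop hx.1 hx.2)]
  rw [Finset.sum_const, Nat.card_Ico, smul_eq_mul]
  exact Nat.mul_comm _ _

lemma card_PallX {α β : ℕ} (hα : 0 < α) (hαβ : α < β) :
    (((Finset.range β) ×ˢ (Finset.range α)).filter
      (fun p => 1 ≤ p.2 ∧ p.2 * β ≤ p.1 * α)).card
      = ∑ x ∈ Finset.range β, x * α / β := by
  have hβ : 0 < β := by omega
  rw [Finset.card_eq_sum_card_fiberwise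
    (f := Prod.fst) (t := Finset.range β)
    (fun p hp => by
      simp only [Finset.mem_coe, Finset.mem_filter, Finset.mem_product] at hp
      exact hp.1.1)]
  apply Finset.sum_congr rfl
  intro x hx
  simp only [Finset.mem_range] at hx
  have hq : x * α / β < α := by
    rw [Nat.div_lt_iff_lt_mul hβ]
    calc x * α < β * α := mul_lt_mul_of_pos_right hx hα
      _ = α * β := mul_comm _ _
  have hfib : ((((Finset.range β) ×ˢ (Finset.range α)).filter
      (fun p => 1 ≤ p.2 ∧ p.2 * β ≤ p.1 * α)).filter (fun p => p.1 = x))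
      = {x} ×ˢ Finset.Icc 1 (x * α / β) := by
    ext ⟨p1, p2⟩
    simp only [Finset.mem_filter, Finset.mem_product, Finset.mem_range,
      Finset.mem_singleton, Finset.mem_Icc]
    constructor
    · rintro ⟨⟨⟨h1, h2⟩, h3, h4⟩, h5⟩
      subst h5
      exact ⟨rfl, h3, (Nat.le_div_iff_mul_le hβ).2 h4⟩
    · rintro ⟨h5, h3, h4⟩
      subst h5
      have h4' : p2 * β ≤ p1 * α := (Nat.le_div_iff_mul_le hβ).1 h4
      exact ⟨⟨⟨hx, by omega⟩, h3, h4'⟩, rfl⟩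
  rw [hfib, Finset.card_product, Finset.card_singleton, Nat.card_Icc]
  simp

end Helpers

set_option maxHeartbeats 2000000

theorem stmt9 (α β g a b : ℕ) (hα : 0 < α) (hαβ : α < β) (hcop : Nat.Coprime α β)
    (hg : g ∉ S α β) (ha1 : 1 ≤ a) (ha2 : a ≤ β - 1) (hb1 : 1 ≤ b) (hb2 : b ≤ α - 1)
    (hrep : g + a * α + b * β = α * β) :
    W α β g = 0 ↔ α = 2 * b ∨ β = 2 * a := by
  have hβ : 0 < β := by omega
  have hα2 : 2 ≤ α := by omega
  have ha2' : a + 1 ≤ β := by omega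
  have hb2' : b + 1 ≤ α := by omega
  have hg1 : 1 ≤ g := by
    rcases Nat.eq_zero_or_pos g with h | h
    · exact absurd (show g ∈ S α β from ⟨0, 0, by omega⟩) hg
    · exact h
  set Q : ℕ := ∑ x ∈ Finset.range β, x * α / β with hQ_def
  set Pall : Finset (ℕ × ℕ) := (Finset.range β ×ˢ Finset.range α).filter
      (fun p => 1 ≤ p.2 ∧ p.2 * β ≤ p.1 * α) with hPall_def
  set P : Finset (ℕ × ℕ) := (Finset.range β ×ˢ Finset.range α).filter
      (fun p => 1 ≤ p.2 ∧ p.2 * β ≤ p.1 * α ∧ ¬(β - a ≤ p.1 ∧ p.2 ≤ b)) with hP_def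
  set Bx : Finset (ℕ × ℕ) := (Finset.range β ×ˢ Finset.range α).filter
      (fun p => 1 ≤ p.2 ∧ p.2 * β ≤ p.1 * α ∧ (β - a ≤ p.1 ∧ p.2 ≤ b)) with hBx_def
  set E : Finset ℕ := P.image (fun p => p.1 * α - p.2 * β) with hE_def
  have hmemP : ∀ x v : ℕ, (x, v) ∈ P ↔
      (x < β ∧ 1 ≤ v ∧ v * β ≤ x * α ∧ ¬(β - a ≤ x ∧ v ≤ b)) := by
    intro x v
    constructor
    · intro hp
      simp only [hP_def, Finset.mem_filter, Finset.mem_product, Finset.mem_range] at hp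
      exact ⟨hp.1.1, hp.2.1, hp.2.2.1, hp.2.2.2⟩
    · rintro ⟨h1, h2, h3, h4⟩
      have hvα : v < α := by
        have hvβ : v * β < α * β := by
          calc v * β ≤ x * α := h3
            _ < β * α := mul_lt_mul_of_pos_right h1 hα
            _ = α * β := mul_comm _ _
        exact lt_of_mul_lt_mul_right hvβ (Nat.zero_le β)
      simp only [hP_def, Finset.mem_filter, Finset.mem_product, Finset.mem_range]
      exact ⟨⟨h1, hvα⟩, h2, h3, h4⟩
  have hmemE : ∀ n, n ∈ E ↔ ∃ x v, (x, v) ∈ P ∧ n + v * β = x * α := by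
    intro n
    simp only [hE_def, Finset.mem_image]
    constructor
    · rintro ⟨⟨x, v⟩, hp, hfp⟩
      have h3 : v * β ≤ x * α := ((hmemP x v).1 hp).2.2.1
      exact ⟨x, v, hp, by simp only at hfp; omega⟩
    · rintro ⟨x, v, hp, heq⟩
      exact ⟨(x, v), hp, by simp only; omega⟩
  have hgap : ∀ n, n ∈ Smod α β g ↔ n ∉ E := by
    intro n
    rw [hmemE n]
    constructor
    · rintro hn ⟨x, v, hp, heq⟩
      rw [hmemP] at hp
      exact (notSmod_iff hα hβ hcop ha2' hb2' hrep n).2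
        ⟨x, v, hp.1, hp.2.1, hp.2.2.2, heq⟩ hn
    · intro hnE
      by_contra hn
      obtain ⟨x, v, hx, hv, hnb, heq⟩ := (notSmod_iff hα hβ hcop ha2' hb2' hrep n).1 hn
      exact hnE ⟨x, v, (hmemP x v).2 ⟨hx, hv, by omega, hnb⟩, heq⟩
  -- cardinalities
  have hPsplit : P = Pall \ Bx := by
    ext ⟨x, v⟩
    simp only [hP_def, hPall_def, hBx_def, Finset.mem_sdiff, Finset.mem_filter,
      Finset.mem_product, Finset.mem_range]
    tauto
  have hBxPall : Bx ⊆ Pall := by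
    intro p hp
    simp only [hPall_def, hBx_def, Finset.mem_filter] at *
    tauto
  have hBxcard : Bx.card = a * b := by
    have hBeq : Bx = Finset.Icc (β - a) (β - 1) ×ˢ Finset.Icc 1 b := by
      ext ⟨x, v⟩
      simp only [hBx_def, Finset.mem_filter, Finset.mem_product, Finset.mem_range,
        Finset.mem_Icc]
      constructor
      · rintro ⟨⟨h1, h2⟩, h3, h4, h5, h6⟩
        exact ⟨⟨h5, by omega⟩, h3, h6⟩
      · rintro ⟨⟨h5, h5'⟩, h3, h6⟩
        have hx : x < β := by omega
        have hkey : b * β ≤ (β - a) * α := by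
          have hE1 : (β - a) * α + a * α = β * α := by
            rw [← Nat.add_mul]; congr 1; omega
          have hE5 : α * β = β * α := mul_comm _ _
          omega
        have h4 : v * β ≤ x * α := by
          calc v * β ≤ b * β := Nat.mul_le_mul_right _ h6
            _ ≤ (β - a) * α := hkey
            _ ≤ x * α := Nat.mul_le_mul_right _ h5
        exact ⟨⟨hx, by omega⟩, h3, h4, h5, h6⟩
    rw [hBeq, Finset.card_product, Nat.card_Icc, Nat.card_Icc]
    have e1 : β - 1 + 1 - (β - a) = a := by omega
    have e2 : b + 1 - 1 = b := by omega
    rw [e1, e2]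
  have hcardPall : Pall.card = Q := card_PallX hα hαβ
  have hcardP : P.card = Q - a * b := by
    rw [hPsplit, Finset.card_sdiff_of_subset hBxPall, hBxcard, hcardPall]
  have hab_le : a * b ≤ Q := by
    calc a * b = Bx.card := hBxcard.symm
      _ ≤ Pall.card := Finset.card_le_card hBxPall
      _ = Q := hcardPall
  have hinj : Set.InjOn (fun p : ℕ × ℕ => p.1 * α - p.2 * β) ↑P := by
    rintro ⟨x, v⟩ hp ⟨x', v'⟩ hp' hfeq
    simp only [Finset.mem_coe] at hp hp'
    rw [hmemP] at hp hp'
    obtain ⟨hx, hv, hvx, -⟩ := hp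
    obtain ⟨hx', hv', hvx', -⟩ := hp'
    simp only at hfeq
    have heq2 : x * α + v' * β = x' * α + v * β := by omega
    obtain ⟨h1, h2⟩ := cancel hcop hβ hx hx' heq2
    simp [h1, h2.symm]
  have hcardE : E.card = P.card := Finset.card_image_of_injOn hinj
  have hsylZ : 2 * (Q : ℤ) = ((α : ℤ) - 1) * ((β : ℤ) - 1) := by
    have h := sylvester hα hαβ hcop
    rw [← hQ_def] at h
    calc 2 * (Q : ℤ) = ((2 * Q : ℕ) : ℤ) := by push_cast; ring
      _ = (((α - 1) * (β - 1) : ℕ) : ℤ) := by rw [h]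
      _ = ((α : ℤ) - 1) * ((β : ℤ) - 1) := by
          rw [Nat.cast_mul, Nat.cast_sub (by omega), Nat.cast_sub (by omega)]
          push_cast; ring
  -- trichotomy
  rcases lt_trichotomy (a * α) (b * β) with hAB | hAB | hAB
  · -- Case A : a*α < b*β
    by_cases hdeg : β ≤ (β - (a + 1)) * α
    · -- nondegenerate
      obtain ⟨n0, hn0⟩ : ∃ n0, n0 + β = (β - (a + 1)) * α :=
        ⟨(β - (a + 1)) * α - β, by omega⟩
      have hp0 : (β - (a + 1), 1) ∈ P := by
        rw [hmemP]
        refine ⟨by omega, le_rfl, ?_, by omega⟩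
        have e : 1 * β = β := one_mul β
        omega
      have hn0E : n0 ∈ E := by
        rw [hmemE]
        refine ⟨β - (a + 1), 1, hp0, ?_⟩
        have e : 1 * β = β := one_mul β
        omega
      have hENE : E.Nonempty := ⟨n0, hn0E⟩
      have hmax : E.max' hENE = n0 := by
        refine le_antisymm (Finset.max'_le _ _ _ ?_) (Finset.le_max' _ _ hn0E)
        intro m hm
        obtain ⟨x, v, hp, heq⟩ := (hmemE m).1 hm
        rw [hmemP] at hp
        obtain ⟨hx, hv, hvx, hnb⟩ := hp
        by_cases hcase : β - a ≤ x
        · have hvb : b + 1 ≤ v := by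
            by_contra hc
            exact hnb ⟨hcase, by omega⟩
          have m1 : x * α ≤ (β - 1) * α := Nat.mul_le_mul_right _ (by omega)
          have m2 : (b + 1) * β ≤ v * β := Nat.mul_le_mul_right _ hvb
          have e1 : (β - (a + 1)) * α + a * α = (β - 1) * α := by
            rw [← Nat.add_mul]; congr 1; omega
          have e2 : (b + 1) * β = b * β + β := by ring
          omega
        · have m1 : x * α ≤ (β - (a + 1)) * α := Nat.mul_le_mul_right _ (by omega)
          have m2 : 1 * β ≤ v * β := Nat.mul_le_mul_right _ hv
          have e : 1 * β = β := one_mul β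
          omega
      have hC : semCond (Smod α β g) = n0 + 1 := by
        rw [semCond_gap _ E hgap hENE, hmax]
      have hsubE : E ⊆ Finset.range (semCond (Smod α β g)) := by
        intro e he
        rw [Finset.mem_range, hC]
        have h := Finset.le_max' E e he
        rw [hmax] at h
        omega
      have hδ : semDelta (Smod α β g) = n0 + 1 - E.card := by
        rw [semDelta_gap _ E hgap hsubE, hC]
      have hcard_le : E.card ≤ n0 + 1 := by
        have h := Finset.card_le_card hsubE
        rwa [Finset.card_range, hC] at h
      have hcard_le' : Q - a * b ≤ n0 + 1 := by
        rw [← hcardP, ← hcardE]; exact hcard_le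
      have hn0Z : (n0 : ℤ) + β = ((β : ℤ) - (a + 1)) * α := by
        zify [ha2'] at hn0
        exact hn0
      have hWeq : W α β g = 2 * (a : ℤ) * b - a * α := by
        rw [W, hδ, hC, hcardE, hcardP]
        zify [hcard_le', hab_le]
        linarith [hsylZ, hn0Z, mul_comm (α : ℤ) (β : ℤ)]
      rw [hWeq]
      constructor
      · intro h
        left
        have ha0 : (0 : ℤ) < a := by exact_mod_cast ha1
        have hz : (a : ℤ) * (2 * b - α) = 0 := by linear_combination h
        rcases mul_eq_zero.1 hz with h' | h'
        · exfalso
          have : a = 0 := by exact_mod_cast h'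
          omega
        · have : (α : ℤ) = 2 * b := by linarith
          exact_mod_cast this
      · rintro (h | h)
        · subst h
          push_cast
          ring
        · exfalso
          subst h
          have e1 : α * (2 * a) = 2 * (a * α) := by ring
          have e2 : b * (2 * a) = 2 * (a * b) := by ring
          omega
    · -- degenerate: P empty
      push_neg at hdeg
      have hPem : P = ∅ := by
        rw [Finset.eq_empty_iff_forall_notMem]
        rintro ⟨x, v⟩ hp
        rw [hmemP] at hp
        obtain ⟨hx, hv, hvx, hnb⟩ := hp
        by_cases hcase : β - a ≤ x
        · have hvb : b + 1 ≤ v := by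
            by_contra hc
            exact hnb ⟨hcase, by omega⟩
          have m1 : x * α ≤ (β - 1) * α := Nat.mul_le_mul_right _ (by omega)
          have m2 : (b + 1) * β ≤ v * β := Nat.mul_le_mul_right _ hvb
          have e1 : (β - (a + 1)) * α + a * α = (β - 1) * α := by
            rw [← Nat.add_mul]; congr 1; omega
          have e2 : (b + 1) * β = b * β + β := by ring
          omega
        · have m1 : x * α ≤ (β - (a + 1)) * α := Nat.mul_le_mul_right _ (by omega)
          have m2 : 1 * β ≤ v * β := Nat.mul_le_mul_right _ hv
          have e : 1 * β = β := one_mul β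
          omega
      have hEem : E = ∅ := by rw [hE_def, hPem, Finset.image_empty]
      have hall : ∀ n, n ∈ Smod α β g := fun n => (hgap n).2 (by simp [hEem])
      have hC : semCond (Smod α β g) = 0 := semCond_univ _ hall
      have hδ : semDelta (Smod α β g) = 0 := by
        rw [semDelta_gap _ E hgap (by rw [hEem, hC]; exact Finset.empty_subset _), hC,
          hEem]
        simp
      have hW0 : W α β g = 0 := by rw [W, hδ, hC]; simp
      have hineq : α * β + 4 ≤ 2 * α + 2 * β := by
        have e1 : (β - (a + 1)) * α + (a + 1) * α = β * α := by
          rw [← Nat.add_mul]; congr 1; omega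
        have e2 : (a + 1) * α = a * α + α := by ring
        have e5 : α * β = β * α := mul_comm _ _
        omega
      have hα_eq : α = 2 := by
        by_contra hne
        have h3 : (3 : ℤ) ≤ α := by exact_mod_cast (by omega : 3 ≤ α)
        have h4 : (4 : ℤ) ≤ β := by exact_mod_cast (by omega : 4 ≤ β)
        have hZ : ((α : ℤ) - 2) * ((β : ℤ) - 2) ≤ 0 := by
          have : ((α * β : ℕ) : ℤ) + 4 ≤ 2 * α + 2 * β := by exact_mod_cast hineq
          push_cast at this
          nlinarith
        nlinarith [mul_le_mul (show (1 : ℤ) ≤ (α : ℤ) - 2 by linarith)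
          (show (1 : ℤ) ≤ (β : ℤ) - 2 by linarith) (by linarith) (by linarith)]
      rw [hW0]
      exact iff_of_true rfl (Or.inl (by omega))
  · -- impossible: a*α = b*β
    exfalso
    have hdvd : β ∣ a * α := ⟨b, by rw [hAB]; ring⟩
    have hdvd2 := Nat.Coprime.dvd_of_dvd_mul_right hcop.symm hdvd
    have := Nat.le_of_dvd (by omega) hdvd2
    omega
  · -- Case B : b*β < a*α
    by_cases hdeg : (b + 1) * β ≤ (β - 1) * α
    · -- nondegenerate
      obtain ⟨n0, hn0⟩ : ∃ n0, n0 + (b + 1) * β = (β - 1) * α :=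
        ⟨(β - 1) * α - (b + 1) * β, by omega⟩
      have hp0 : (β - 1, b + 1) ∈ P := by
        rw [hmemP]
        exact ⟨by omega, by omega, by omega, by omega⟩
      have hn0E : n0 ∈ E := by
        rw [hmemE]
        exact ⟨β - 1, b + 1, hp0, by omega⟩
      have hENE : E.Nonempty := ⟨n0, hn0E⟩
      have hmax : E.max' hENE = n0 := by
        refine le_antisymm (Finset.max'_le _ _ _ ?_) (Finset.le_max' _ _ hn0E)
        intro m hm
        obtain ⟨x, v, hp, heq⟩ := (hmemE m).1 hm
        rw [hmemP] at hp
        obtain ⟨hx, hv, hvx, hnb⟩ := hp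
        by_cases hcase : β - a ≤ x
        · have hvb : b + 1 ≤ v := by
            by_contra hc
            exact hnb ⟨hcase, by omega⟩
          have m1 : x * α ≤ (β - 1) * α := Nat.mul_le_mul_right _ (by omega)
          have m2 : (b + 1) * β ≤ v * β := Nat.mul_le_mul_right _ hvb
          omega
        · have m1 : x * α ≤ (β - (a + 1)) * α := Nat.mul_le_mul_right _ (by omega)
          have m2 : 1 * β ≤ v * β := Nat.mul_le_mul_right _ hv
          have e : 1 * β = β := one_mul β
          have e1 : (β - (a + 1)) * α + a * α = (β - 1) * α := by
            rw [← Nat.add_mul]; congr 1; omega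
          have e2 : (b + 1) * β = b * β + β := by ring
          omega
      have hC : semCond (Smod α β g) = n0 + 1 := by
        rw [semCond_gap _ E hgap hENE, hmax]
      have hsubE : E ⊆ Finset.range (semCond (Smod α β g)) := by
        intro e he
        rw [Finset.mem_range, hC]
        have h := Finset.le_max' E e he
        rw [hmax] at h
        omega
      have hδ : semDelta (Smod α β g) = n0 + 1 - E.card := by
        rw [semDelta_gap _ E hgap hsubE, hC]
      have hcard_le : E.card ≤ n0 + 1 := by
        have h := Finset.card_le_card hsubE
        rwa [Finset.card_range, hC] at h
      have hcard_le' : Q - a * b ≤ n0 + 1 := by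
        rw [← hcardP, ← hcardE]; exact hcard_le
      have hn0Z : (n0 : ℤ) + ((b : ℤ) + 1) * β = ((β : ℤ) - 1) * α := by
        zify [show 1 ≤ β by omega] at hn0
        push_cast at hn0
        linarith [hn0]
      have hWeq : W α β g = 2 * (a : ℤ) * b - b * β := by
        rw [W, hδ, hC, hcardE, hcardP]
        zify [hcard_le', hab_le]
        linarith [hsylZ, hn0Z, mul_comm (α : ℤ) (β : ℤ)]
      rw [hWeq]
      constructor
      · intro h
        right
        have hb0 : (0 : ℤ) < b := by exact_mod_cast hb1
        have hz : (b : ℤ) * (2 * a - β) = 0 := by linear_combination h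
        rcases mul_eq_zero.1 hz with h' | h'
        · exfalso
          have : b = 0 := by exact_mod_cast h'
          omega
        · have : (β : ℤ) = 2 * a := by linarith
          exact_mod_cast this
      · rintro (h | h)
        · exfalso
          subst h
          have e1 : (2 * b) * β = 2 * (b * β) := by ring
          have e2 : a * (2 * b) = 2 * (a * b) := by ring
          have e3 : g + a * (2 * b) + b * β = (2 * b) * β := hrep
          omega
        · subst h
          push_cast
          ring
    · -- degenerate: P empty
      push_neg at hdeg
      have hPem : P = ∅ := by
        rw [Finset.eq_empty_iff_forall_notMem]
        rintro ⟨x, v⟩ hp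
        rw [hmemP] at hp
        obtain ⟨hx, hv, hvx, hnb⟩ := hp
        by_cases hcase : β - a ≤ x
        · have hvb : b + 1 ≤ v := by
            by_contra hc
            exact hnb ⟨hcase, by omega⟩
          have m1 : x * α ≤ (β - 1) * α := Nat.mul_le_mul_right _ (by omega)
          have m2 : (b + 1) * β ≤ v * β := Nat.mul_le_mul_right _ hvb
          omega
        · have m1 : x * α ≤ (β - (a + 1)) * α := Nat.mul_le_mul_right _ (by omega)
          have m2 : 1 * β ≤ v * β := Nat.mul_le_mul_right _ hv
          have e : 1 * β = β := one_mul β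
          have e1 : (β - (a + 1)) * α + a * α = (β - 1) * α := by
            rw [← Nat.add_mul]; congr 1; omega
          have e2 : (b + 1) * β = b * β + β := by ring
          omega
      have hEem : E = ∅ := by rw [hE_def, hPem, Finset.image_empty]
      have hall : ∀ n, n ∈ Smod α β g := fun n => (hgap n).2 (by simp [hEem])
      have hC : semCond (Smod α β g) = 0 := semCond_univ _ hall
      have hδ : semDelta (Smod α β g) = 0 := by
        rw [semDelta_gap _ E hgap (by rw [hEem, hC]; exact Finset.empty_subset _), hC,
          hEem]
        simp
      have hW0 : W α β g = 0 := by rw [W, hδ, hC]; simp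
      have hineq : α * β + 4 ≤ 2 * α + 2 * β := by
        have e1 : (β - 1) * α + 1 * α = β * α := by
          rw [← Nat.add_mul]; congr 1; omega
        have e2 : (b + 1) * β = b * β + β := by ring
        have e3 : 1 * α = α := one_mul α
        have e5 : α * β = β * α := mul_comm _ _
        omega
      have hα_eq : α = 2 := by
        by_contra hne
        have h3 : (3 : ℤ) ≤ α := by exact_mod_cast (by omega : 3 ≤ α)
        have h4 : (4 : ℤ) ≤ β := by exact_mod_cast (by omega : 4 ≤ β)
        have hZ : ((α : ℤ) - 2) * ((β : ℤ) - 2) ≤ 0 := by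
          have : ((α * β : ℕ) : ℤ) + 4 ≤ 2 * α + 2 * β := by exact_mod_cast hineq
          push_cast at this
          nlinarith
        nlinarith [mul_le_mul (show (1 : ℤ) ≤ (α : ℤ) - 2 by linarith)
          (show (1 : ℤ) ≤ (β : ℤ) - 2 by linarith) (by linarith) (by linarith)]
      rw [hW0]
      exact iff_of_true rfl (Or.inl (by omega))
end

section
/- Let Γ = ⟨α, β⟩ with gcd(α,β)=1 and g = αβ − aα − bβ a gap with b > ⌊α/2⌋ and a ≤ ⌊β/2⌋. Then g' = αβ − aα − (α−b)β is also a gap of Γ, and W(g') = −W(g). -/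
lemma notMem_S_of_rep {α β n x y : ℕ} (hβ : 0 < β) (hcop : Nat.Coprime α β)
    (hx1 : 1 ≤ x) (hy1 : 1 ≤ y) (heq : n + x * α + y * β = α * β) : n ∉ S α β := by
  rintro ⟨c, d, rfl⟩
  have heq2 : (c + x) * α + (d + y) * β = α * β := by ring_nf; ring_nf at heq; linarith
  have hd1 : β ∣ (c + x) * α := by
    have h1 : (c + x) * α = α * β - (d + y) * β := Nat.eq_sub_of_add_eq heq2
    rw [h1]
    exact Nat.dvd_sub ⟨α, mul_comm _ _⟩ ⟨d + y, mul_comm _ _⟩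
  have hd2 : β ∣ c + x := hcop.symm.dvd_of_dvd_mul_right hd1
  have hle : β ≤ c + x := Nat.le_of_dvd (by omega) hd2
  have h3 : β * α ≤ (c + x) * α := Nat.mul_le_mul_right _ hle
  have h4 : 1 * β ≤ (d + y) * β := Nat.mul_le_mul_right _ (by omega)
  have := mul_comm β α
  linarith

lemma repS {α β : ℕ} (hβ : 0 < β) (hcop : Nat.Coprime α β) (n : ℕ) :
    n ∈ S α β ∨ ∃ x y, 1 ≤ x ∧ x < β ∧ 1 ≤ y ∧ n + x * α + y * β = α * β := by
  set u := (n * α ^ (Nat.totient β - 1)) % β with hu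
  have hult : u < β := Nat.mod_lt _ hβ
  have hmod : u * α ≡ n [MOD β] := by
    calc u * α ≡ n * α ^ (Nat.totient β - 1) * α [MOD β] := (Nat.mod_modEq _ β).mul_right α
    _ = n * α ^ Nat.totient β := by
        rw [mul_assoc, ← pow_succ, Nat.sub_add_cancel (Nat.totient_pos.mpr hβ)]
    _ ≡ n * 1 [MOD β] := (Nat.ModEq.pow_totient hcop).mul_left n
    _ = n := mul_one n
  rcases le_or_gt (u * α) n with h | h
  · left
    obtain ⟨t, ht⟩ := (Nat.modEq_iff_dvd' h).mp hmod
    have ht2 : n = β * t + u * α := (Nat.sub_eq_iff_eq_add h).mp ht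
    exact ⟨u, t, by linarith [mul_comm β t]⟩
  · right
    have hu1 : 1 ≤ u := by
      rcases Nat.eq_zero_or_pos u with h0 | h0
      · rw [h0, zero_mul] at h; omega
      · exact h0
    obtain ⟨k, hk⟩ := (Nat.modEq_iff_dvd' h.le).mp hmod.symm
    have hkn : u * α = β * k + n := (Nat.sub_eq_iff_eq_add h.le).mp hk
    have hk1 : 1 ≤ k := by
      rcases Nat.eq_zero_or_pos k with h0 | h0
      · rw [h0, mul_zero, zero_add] at hkn; omega
      · exact h0
    refine ⟨β - u, k, by omega, by omega, hk1, ?_⟩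
    have h2 : (β - u) * α + u * α = β * α := by
      rw [← Nat.add_mul, Nat.sub_add_cancel hult.le]
    have := mul_comm β α
    have := mul_comm β k
    linarith

lemma pair_eq {α β x₁ y₁ x₂ y₂ : ℕ} (hβ : 0 < β) (hcop : Nat.Coprime α β)
    (h1 : x₁ < β) (h2 : x₂ < β)
    (h : x₁ * α + y₁ * β = x₂ * α + y₂ * β) : x₁ = x₂ ∧ y₁ = y₂ := by
  have hz : ((x₁ : ℤ) - x₂) * α = ((y₂ : ℤ) - y₁) * β := by push_cast; linarith [h]
  have hcz : IsCoprime (β : ℤ) (α : ℤ) := Nat.isCoprime_iff_coprime.mpr hcop.symm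
  have hdvd : (β : ℤ) ∣ ((x₁ : ℤ) - x₂) := by
    refine hcz.dvd_of_dvd_mul_right ⟨(y₂ : ℤ) - y₁, ?_⟩
    linarith [hz]
  obtain ⟨t, ht⟩ := hdvd
  have hx : x₁ = x₂ := by
    rcases lt_trichotomy t 0 with h0 | h0 | h0
    · have hb : (β : ℤ) * t ≤ -β := by nlinarith [Int.natCast_pos.mpr hβ]
      have : (x₂ : ℤ) < β := by exact_mod_cast h2
      have : (0 : ℤ) ≤ x₁ := by positivity
      exfalso; linarith
    · rw [h0, mul_zero] at ht; omega
    · have hb : (β : ℤ) ≤ β * t := by nlinarith [Int.natCast_pos.mpr hβ]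
      have : (x₁ : ℤ) < β := by exact_mod_cast h1
      have : (0 : ℤ) ≤ x₂ := by positivity
      exfalso; linarith
  refine ⟨hx, ?_⟩
  subst hx
  have : y₁ * β = y₂ * β := by omega
  exact Nat.eq_of_mul_eq_mul_right hβ this

lemma not_shift {α β g a b x y n : ℕ} (hβ : 0 < β) (hcop : Nat.Coprime α β)
    (hb2 : b < α) (haβ : a < β)
    (hrepg : g + a * α + b * β = α * β) (hn : n + x * α + y * β = α * β)
    (hns : ¬(x ≤ a ∧ y ≤ b)) : ∀ s ∈ S α β, n ≠ g + s := by
  rintro s ⟨c, d, rfl⟩ h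
  have hz : ((c : ℤ) + x - a) * α = ((b : ℤ) - d - y) * β := by
    have h1 : ((n : ℤ)) + x * α + y * β = α * β := by exact_mod_cast hn
    have h2 : ((g : ℤ)) + a * α + b * β = α * β := by exact_mod_cast hrepg
    have h3 : (n : ℤ) = g + (c * α + d * β) := by exact_mod_cast h
    ring_nf; ring_nf at h1 h2 h3; linarith
  have hcz : IsCoprime (β : ℤ) (α : ℤ) := Nat.isCoprime_iff_coprime.mpr hcop.symm
  have hdvd : (β : ℤ) ∣ ((c : ℤ) + x - a) := by
    refine hcz.dvd_of_dvd_mul_right ⟨(b : ℤ) - d - y, ?_⟩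
    linarith [hz]
  obtain ⟨t, ht⟩ := hdvd
  have hβz : (0 : ℤ) < β := by exact_mod_cast hβ
  have hα0 : 0 < α := by omega
  have hαz : (0 : ℤ) < α := by exact_mod_cast hα0
  rcases lt_trichotomy t 0 with h0 | h0 | h0
  · have hb : (β : ℤ) * t ≤ -β := by nlinarith
    have ha' : (a : ℤ) < β := by exact_mod_cast haβ
    have : (0:ℤ) ≤ (c:ℤ) + x := by positivity
    linarith
  · rw [h0, mul_zero] at ht
    have hcx : (c : ℤ) + x = a := by linarith
    have hyb : ((b : ℤ) - d - y) * β = 0 := by rw [← hz, hcx]; ring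
    have hb' : (b : ℤ) = d + y := by
      rcases mul_eq_zero.mp hyb with h1 | h1
      · linarith
      · exfalso; linarith
    apply hns
    constructor
    · have : (x : ℤ) ≤ a := by linarith [Int.natCast_nonneg c]
      exact_mod_cast this
    · have : (y : ℤ) ≤ b := by linarith [Int.natCast_nonneg d]
      exact_mod_cast this
  · have hb : (β : ℤ) ≤ β * t := by nlinarith
    have h4 : (β : ℤ) * α ≤ ((c : ℤ) + x - a) * α := by
      rw [ht]
      exact mul_le_mul_of_nonneg_right hb hαz.le
    have h5 : ((b : ℤ) - d - y) * β = b * β - ((d : ℤ) + y) * β := by ring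
    have hdy : (0 : ℤ) ≤ ((d : ℤ) + y) * β := by positivity
    have h6 : (b : ℤ) < α := by exact_mod_cast hb2
    have hbb : (b : ℤ) * β < α * β := mul_lt_mul_of_pos_right h6 hβz
    have hcm : (β : ℤ) * α = α * β := mul_comm _ _
    linarith

lemma count_pos (α β : ℕ) (hcop : Nat.Coprime α β) :
    2 * ((Finset.Ico 1 β ×ˢ Finset.Ico 1 α).filter
      (fun p => p.1 * α + p.2 * β < α * β)).card = (β - 1) * (α - 1) := by
  set Q := Finset.Ico 1 β ×ˢ Finset.Ico 1 α with hQ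
  set pos : ℕ × ℕ → Prop := fun p => p.1 * α + p.2 * β < α * β with hpos
  have key : ∀ p ∈ Q, ¬ (p.1 * α + p.2 * β = α * β) := by
    rintro ⟨x, y⟩ hp heq
    simp only [hQ, Finset.mem_product, Finset.mem_Ico] at hp
    have hd : β ∣ x * α := by
      have h1 : x * α = α * β - y * β := Nat.eq_sub_of_add_eq heq
      rw [h1]
      exact Nat.dvd_sub ⟨α, mul_comm _ _⟩ ⟨y, mul_comm _ _⟩
    have := Nat.le_of_dvd (by omega) (hcop.symm.dvd_of_dvd_mul_right hd)
    omega
  have hcard : (Q.filter pos).card = (Q.filter (fun p => ¬ pos p)).card := by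
    apply Finset.card_bij' (i := fun p _ => (β - p.1, α - p.2))
      (j := fun p _ => (β - p.1, α - p.2))
    · rintro ⟨x, y⟩ hp
      simp only [Finset.mem_filter, hQ, Finset.mem_product, Finset.mem_Ico, hpos] at hp ⊢
      obtain ⟨⟨⟨hx1, hx2⟩, hy1, hy2⟩, hlt⟩ := hp
      refine ⟨⟨⟨by omega, by omega⟩, by omega, by omega⟩, ?_⟩
      have e1 : (β - x) * α + x * α = β * α := by
        rw [← Nat.add_mul, Nat.sub_add_cancel hx2.le]
      have e2 : (α - y) * β + y * β = α * β := by
        rw [← Nat.add_mul, Nat.sub_add_cancel hy2.le]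
      have := mul_comm β α
      push_neg
      linarith
    · rintro ⟨x, y⟩ hp
      simp only [Finset.mem_filter, hQ, Finset.mem_product, Finset.mem_Ico, hpos] at hp ⊢
      obtain ⟨⟨⟨hx1, hx2⟩, hy1, hy2⟩, hlt⟩ := hp
      push_neg at hlt
      have hne : ¬ (x * α + y * β = α * β) := key ⟨x, y⟩ (by
        simp only [hQ, Finset.mem_product, Finset.mem_Ico]; exact ⟨⟨hx1, hx2⟩, hy1, hy2⟩)
      have hgt : α * β < x * α + y * β := lt_of_le_of_ne hlt (fun h => hne h.symm)
      refine ⟨⟨⟨by omega, by omega⟩, by omega, by omega⟩, ?_⟩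
      have e1 : (β - x) * α + x * α = β * α := by
        rw [← Nat.add_mul, Nat.sub_add_cancel hx2.le]
      have e2 : (α - y) * β + y * β = α * β := by
        rw [← Nat.add_mul, Nat.sub_add_cancel hy2.le]
      have := mul_comm β α
      linarith
    · rintro ⟨x, y⟩ hp
      simp only [Finset.mem_filter, hQ, Finset.mem_product, Finset.mem_Ico] at hp
      obtain ⟨⟨⟨hx1, hx2⟩, hy1, hy2⟩, -⟩ := hp
      simp only [Prod.mk.injEq]
      omega
    · rintro ⟨x, y⟩ hp
      simp only [Finset.mem_filter, hQ, Finset.mem_product, Finset.mem_Ico] at hp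
      obtain ⟨⟨⟨hx1, hx2⟩, hy1, hy2⟩, -⟩ := hp
      simp only [Prod.mk.injEq]
      omega
  have hsum : (Q.filter pos).card + (Q.filter (fun p => ¬ pos p)).card = Q.card :=
    Finset.card_filter_add_card_filter_not pos
  have hQc : Q.card = (β - 1) * (α - 1) := by
    simp [hQ, Nat.card_Ico]
  show 2 * (Q.filter pos).card = (β - 1) * (α - 1)
  omega

set_option maxHeartbeats 2000000 in
lemma W_eq (α β g a b : ℕ) (hα : 3 ≤ α) (hαβ : α < β) (hcop : Nat.Coprime α β)
    (ha1 : 1 ≤ a) (hb1 : 1 ≤ b) (hb2 : b + 1 ≤ α) (hg : 1 ≤ g)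
    (hrep : g + a * α + b * β = α * β) (hcase : a * α < b * β) :
    W α β g = 2 * (a : ℤ) * b - a * α := by
  have hβ : 0 < β := by omega
  have hβ4 : 4 ≤ β := by omega
  -- basic inequalities
  have hbβαβ : b * β + β ≤ α * β := by
    have : (b + 1) * β ≤ α * β := Nat.mul_le_mul_right _ hb2
    linarith [Nat.add_mul b 1 β]
  have h2a : 2 * a < β := by
    have h1 : 2 * (a * α) < α * β := by linarith
    have h2 : (2 * a) * α < β * α := by linarith [mul_comm β α, mul_assoc 2 a α]
    by_contra hc
    push_neg at hc
    exact absurd h2 (not_lt.mpr (Nat.mul_le_mul_right _ hc))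
  have haβ : a < β := by omega
  -- existence of F
  have hFle : (a + 1) * α + 1 * β ≤ α * β := by
    zify
    have h7 : (2 : ℤ) ≤ ((α : ℤ) - 2) * ((β : ℤ) - 2) := by
      have h1 : (3 : ℤ) ≤ α := by exact_mod_cast hα
      have h2 : (4 : ℤ) ≤ β := by exact_mod_cast hβ4
      nlinarith
    have h8 : 2 * ((a : ℤ) * α) ≤ (α : ℤ) * β - 2 := by
      have h1 : (g : ℤ) + a * α + b * β = α * β := by exact_mod_cast hrep
      have h2 : (a : ℤ) * α < b * β := by exact_mod_cast hcase
      have h3 : (1 : ℤ) ≤ g := by exact_mod_cast hg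
      linarith
    nlinarith
  obtain ⟨F, hF⟩ := Nat.le.dest hFle
  have hF : F + ((a + 1) * α + 1 * β) = α * β := by linarith [hF]
  have hFz : (F : ℤ) + a * α + α + β = α * β := by
    have := hF
    zify at this
    linarith
  -- membership above F
  have mem_big : ∀ n, F < n → n ∈ Smod α β g := by
    intro n hn
    rcases repS hβ hcop n with h | ⟨x, y, hx1, hx2, hy1, hxy⟩
    · exact Or.inl h
    · have hxa : x ≤ a := by
        by_contra hc
        push_neg at hc
        have h1 : (a + 1) * α ≤ x * α := Nat.mul_le_mul_right _ hc
        have h2 : 1 * β ≤ y * β := Nat.mul_le_mul_right _ hy1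
        linarith
      have hyb : y ≤ b := by
        by_contra hc
        push_neg at hc
        have h1 : (b + 1) * β ≤ y * β := Nat.mul_le_mul_right _ hc
        have h2 : 1 * α ≤ x * α := Nat.mul_le_mul_right _ hx1
        have h3 : (b + 1) * β = b * β + β := by ring
        linarith
      right
      refine ⟨(a - x) * α + (b - y) * β, ⟨a - x, b - y, rfl⟩, ?_⟩
      have e1 : (a - x) * α + x * α = a * α := by
        rw [← Nat.add_mul, Nat.sub_add_cancel hxa]
      have e2 : (b - y) * β + y * β = b * β := by
        rw [← Nat.add_mul, Nat.sub_add_cancel hyb]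
      linarith
  -- F not in Smod
  have hFnot : F ∉ Smod α β g := by
    intro hFm
    rcases hFm with h | ⟨s, hs, hgs⟩
    · exact notMem_S_of_rep hβ hcop (by omega) (le_refl 1)
        (by linarith [hF] : F + (a+1) * α + 1 * β = α * β) h
    · exact not_shift hβ hcop (by omega) haβ hrep
        (by linarith [hF] : F + (a+1) * α + 1 * β = α * β)
        (by omega) s hs hgs
  -- conductor
  have hmemc : (F + 1) ∈ {c | ∀ n, c ≤ n → n ∈ Smod α β g} := by
    intro n hn
    exact mem_big n (by omega)
  have hcond : semCond (Smod α β g) = F + 1 := by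
    apply le_antisymm
    · exact Nat.sInf_le hmemc
    · apply le_csInf ⟨F + 1, hmemc⟩
      intro c hc
      by_contra hlt
      push_neg at hlt
      exact hFnot (hc F (by omega))
  -- gap set as finset image
  classical
  set Q := Finset.Ico 1 β ×ˢ Finset.Ico 1 α with hQdef
  set P := Q.filter (fun p => p.1 * α + p.2 * β < α * β ∧ ¬(p.1 ≤ a ∧ p.2 ≤ b)) with hPdef
  set φ : ℕ × ℕ → ℕ := fun p => α * β - (p.1 * α + p.2 * β) with hφ
  have hgapset : {n : ℕ | n ∉ Smod α β g} = ↑(P.image φ) := by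
    ext n
    simp only [Set.mem_setOf_eq, Finset.coe_image, Set.mem_image, Finset.mem_coe]
    constructor
    · intro hn
      have hnS : n ∉ S α β := fun h => hn (Or.inl h)
      rcases repS hβ hcop n with h | ⟨x, y, hx1, hx2, hy1, hxy⟩
      · exact absurd h hnS
      · have hn1 : 1 ≤ n := by
          rcases Nat.eq_zero_or_pos n with h0 | h0
          · subst h0
            exact absurd (⟨0, 0, by ring⟩ : (0:ℕ) ∈ S α β) hnS
          · exact h0
        have hyα : y < α := by
          by_contra hc
          push_neg at hc
          have h1 : α * β ≤ y * β := Nat.mul_le_mul_right _ hc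
          have h2 : 1 * α ≤ x * α := Nat.mul_le_mul_right _ hx1
          linarith
        have hns : ¬(x ≤ a ∧ y ≤ b) := by
          rintro ⟨hxa, hyb⟩
          apply hn
          right
          refine ⟨(a - x) * α + (b - y) * β, ⟨a - x, b - y, rfl⟩, ?_⟩
          have e1 : (a - x) * α + x * α = a * α := by
            rw [← Nat.add_mul, Nat.sub_add_cancel hxa]
          have e2 : (b - y) * β + y * β = b * β := by
            rw [← Nat.add_mul, Nat.sub_add_cancel hyb]
          linarith
        refine ⟨(x, y), ?_, ?_⟩
        · rw [hPdef]
          simp only [Finset.mem_filter, hQdef, Finset.mem_product, Finset.mem_Ico]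
          exact ⟨⟨⟨hx1, hx2⟩, hy1, hyα⟩, by linarith, hns⟩
        · show α * β - (x * α + y * β) = n
          exact (Nat.eq_sub_of_add_eq (by linarith : n + (x * α + y * β) = α * β)).symm
    · rintro ⟨⟨x, y⟩, hpP, rfl⟩
      rw [hPdef] at hpP
      simp only [Finset.mem_filter, hQdef, Finset.mem_product, Finset.mem_Ico] at hpP
      obtain ⟨⟨⟨hx1, hx2⟩, hy1, hy2⟩, hpos, hns⟩ := hpP
      have hpe : α * β - (x * α + y * β) + (x * α + y * β) = α * β := Nat.sub_add_cancel hpos.le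
      have hpe2 : φ (x, y) + x * α + y * β = α * β := by
        show α * β - (x * α + y * β) + x * α + y * β = α * β
        linarith
      intro hmem
      rcases hmem with h | ⟨s, hs, hgs⟩
      · exact notMem_S_of_rep hβ hcop hx1 hy1 hpe2 h
      · exact not_shift hβ hcop (by omega) haβ hrep hpe2 hns s hs hgs
  have himg_iff : ∀ n : ℕ, n ∈ (P.image φ) ↔ n ∉ Smod α β g := by
    intro n
    rw [← Finset.mem_coe, ← hgapset]
    exact Iff.rfl
  have hsubF : ∀ n ∈ P.image φ, n < F + 1 := by
    intro n hn
    have hnm := (himg_iff n).mp hn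
    by_contra hc
    push_neg at hc
    exact hnm (mem_big n (by omega))
  have hinj : Set.InjOn φ ↑P := by
    rintro ⟨x₁, y₁⟩ hp ⟨x₂, y₂⟩ hq heq
    rw [Finset.mem_coe, hPdef] at hp hq
    simp only [Finset.mem_filter, hQdef, Finset.mem_product, Finset.mem_Ico] at hp hq
    obtain ⟨⟨⟨hw1, hw2⟩, -, -⟩, hpos1, -⟩ := hp
    obtain ⟨⟨⟨hw1', hw2'⟩, -, -⟩, hpos2, -⟩ := hq
    have e1 : φ (x₁, y₁) + (x₁ * α + y₁ * β) = α * β := Nat.sub_add_cancel hpos1.le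
    have e2 : φ (x₂, y₂) + (x₂ * α + y₂ * β) = α * β := Nat.sub_add_cancel hpos2.le
    rw [heq] at e1
    have hmm : x₁ * α + y₁ * β = x₂ * α + y₂ * β := Nat.add_left_cancel (e1.trans e2.symm)
    obtain ⟨hh1, hh2⟩ := pair_eq hβ hcop hw2 hw2' hmm
    simp [hh1, hh2]
  have hcardimg : (P.image φ).card = P.card := Finset.card_image_of_injOn hinj
  have hsplit : ((Q.filter (fun p => p.1 * α + p.2 * β < α * β)).filter (fun p => (p.1 ≤ a ∧ p.2 ≤ b))).card
      + ((Q.filter (fun p => p.1 * α + p.2 * β < α * β)).filter (fun p => ¬(p.1 ≤ a ∧ p.2 ≤ b))).card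
      = (Q.filter (fun p => p.1 * α + p.2 * β < α * β)).card :=
    Finset.card_filter_add_card_filter_not _
  have hmerge : (Q.filter (fun p => p.1 * α + p.2 * β < α * β)).filter (fun p => ¬(p.1 ≤ a ∧ p.2 ≤ b)) = P := by
    rw [Finset.filter_filter]
  have hsmall : (Q.filter (fun p => p.1 * α + p.2 * β < α * β)).filter (fun p => (p.1 ≤ a ∧ p.2 ≤ b))
      = Finset.Ico 1 (a+1) ×ˢ Finset.Ico 1 (b+1) := by
    ext ⟨x, y⟩
    simp only [Finset.mem_filter, hQdef, Finset.mem_product, Finset.mem_Ico]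
    constructor
    · rintro ⟨⟨⟨⟨hx1, hx2⟩, hy1, hy2⟩, -⟩, hxa, hyb⟩
      exact ⟨⟨hx1, by omega⟩, hy1, by omega⟩
    · rintro ⟨⟨hx1, hxa⟩, hy1, hyb⟩
      have hxa' : x ≤ a := by omega
      have hyb' : y ≤ b := by omega
      have h1 : x * α ≤ a * α := Nat.mul_le_mul_right _ hxa'
      have h2 : y * β ≤ b * β := Nat.mul_le_mul_right _ hyb'
      exact ⟨⟨⟨⟨hx1, by omega⟩, hy1, by omega⟩, by linarith⟩, hxa', hyb'⟩
  have hsmallcard : (Finset.Ico 1 (a+1) ×ˢ Finset.Ico 1 (b+1)).card = a * b := by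
    simp [Nat.card_Ico]
  have hposcard := count_pos α β hcop
  have hIio : (Set.Iio (F+1)).ncard = F + 1 := by
    rw [← Finset.coe_range, Set.ncard_coe_finset, Finset.card_range]
  have hsetdiff : {x ∈ Smod α β g | x < semCond (Smod α β g)} = Set.Iio (F+1) \ ↑(P.image φ) := by
    rw [hcond]
    ext n
    have h1 : n ∈ (↑(P.image φ) : Set ℕ) ↔ n ∉ Smod α β g := by
      rw [← hgapset]
      exact Iff.rfl
    simp only [Set.mem_setOf_eq, Set.mem_diff, Set.mem_Iio, h1]
    tauto
  have hPle : P.card ≤ F + 1 := by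
    have hsub : P.image φ ⊆ Finset.range (F+1) := fun n hn => Finset.mem_range.mpr (hsubF n hn)
    calc P.card = (P.image φ).card := hcardimg.symm
    _ ≤ (Finset.range (F+1)).card := Finset.card_le_card hsub
    _ = F + 1 := Finset.card_range _
  have hdelta : semDelta (Smod α β g) = (F + 1) - P.card := by
    show Set.ncard {x ∈ Smod α β g | x < semCond (Smod α β g)} = (F + 1) - P.card
    rw [hsetdiff, Set.ncard_diff (by
        intro n hn
        exact Set.mem_Iio.mpr (hsubF n (Finset.mem_coe.mp hn))) ((P.image φ).finite_toSet),
      hIio, Set.ncard_coe_finset, hcardimg]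
  show 2 * (semDelta (Smod α β g) : ℤ) - (semCond (Smod α β g) : ℤ) = 2 * a * b - a * α
  rw [hdelta, hcond]
  have hPn : P.card + a * b = (Q.filter (fun p => p.1 * α + p.2 * β < α * β)).card := by
    rw [← hmerge, ← hsmallcard, ← hsmall]
    omega
  have hPz : (P.card : ℤ) + (a : ℤ) * b = ((Q.filter (fun p => p.1 * α + p.2 * β < α * β)).card : ℤ) := by
    exact_mod_cast hPn
  have hposz : 2 * ((Q.filter (fun p => p.1 * α + p.2 * β < α * β)).card : ℤ)
      = ((β:ℤ) - 1) * ((α:ℤ) - 1) := by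
    have hc := congrArg (Nat.cast : ℕ → ℤ) hposcard
    rw [← hQdef] at hc
    push_cast [Nat.cast_sub (show 1 ≤ β by omega), Nat.cast_sub (show 1 ≤ α by omega)] at hc
    exact hc
  have hexp : ((β:ℤ) - 1) * ((α:ℤ) - 1) = (α:ℤ) * β - α - β + 1 := by ring
  push_cast [Nat.cast_sub hPle]
  linarith

theorem stmt12 (α β g a b : ℕ) (hα : 0 < α) (hαβ : α < β) (hcop : Nat.Coprime α β)
    (hg : g ∉ S α β) (ha1 : 1 ≤ a) (ha2 : a ≤ β - 1) (hb1 : 1 ≤ b) (hb2 : b ≤ α - 1)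
    (hrep : g + a * α + b * β = α * β) (hb : α / 2 < b) (ha : a ≤ β / 2) :
    ∀ g' : ℕ, g' + a * α + (α - b) * β = α * β →
      g' ∉ S α β ∧ W α β g' = - W α β g := by
  intro g' hrep'
  have hα3 : 3 ≤ α := by omega
  have hβ : 0 < β := by omega
  have hg1 : 1 ≤ g := by
    rcases Nat.eq_zero_or_pos g with h0 | h0
    · subst h0
      exact absurd (⟨0, 0, by ring⟩ : (0:ℕ) ∈ S α β) hg
    · exact h0
  have hbα : b + 1 ≤ α := by omega
  have hba : 1 ≤ α - b := by omega
  have hsub : (α - b) * β + b * β = α * β := by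
    rw [← Nat.add_mul, Nat.sub_add_cancel (by omega : b ≤ α)]
  have hcase : a * α < b * β := by
    have h1 : (2*a) * α ≤ β * α := Nat.mul_le_mul_right _ (by omega)
    have h2 : (α + 1) * β ≤ (2*b) * β := Nat.mul_le_mul_right _ (by omega)
    have e1 : (2*a)*α = 2*(a*α) := by ring
    have e2 : (2*b)*β = 2*(b*β) := by ring
    have e3 : (α+1)*β = α*β + β := by ring
    have e4 := mul_comm β α
    linarith
  have hg'1 : 1 ≤ g' := by
    have h3 : (α - b) * β ≤ b * β := Nat.mul_le_mul_right _ (by omega)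
    linarith [hrep, hrep', hsub]
  have hcase' : a * α < (α - b) * β := by linarith [hrep, hsub]
  refine ⟨notMem_S_of_rep hβ hcop ha1 hba hrep', ?_⟩
  rw [W_eq α β g a b hα3 hαβ hcop ha1 hb1 hbα hg1 hrep hcase,
    W_eq α β g' a (α - b) hα3 hαβ hcop ha1 hba (by omega) hg'1 hrep' hcase']
  push_cast [Nat.cast_sub (show b ≤ α by omega)]
  ring
end

section
/- Let Γ = ⟨α, β⟩ with gcd(α,β)=1 and g = αβ − aα − bβ a gap with a > ⌊β/2⌋ and b ≤ ⌊α/2⌋. Then g' = αβ − (β−a)α − bβ is also a gap of Γ, and W(g') = −W(g). -/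
lemma nogap {α β : ℕ} (hcop : Nat.Coprime α β) {n i j : ℕ}
    (hi1 : 1 ≤ i) (hi2 : i ≤ β - 1) (hj1 : 1 ≤ j) (hj2 : j ≤ α - 1)
    (h : n + i * α + j * β = α * β) : n ∉ S α β := by
  rintro ⟨x, y, rfl⟩
  have hβ : 2 ≤ β := by omega
  have hα : 2 ≤ α := by omega
  have key : (x + i) * α + (y + j) * β = α * β := by rw [add_mul, add_mul]; omega
  have hdvd : β ∣ (x + i) * α := by
    have h1 : (x + i) * α = α * β - (y + j) * β := by omega
    rw [h1]
    exact Nat.dvd_sub ⟨α, by ring⟩ ⟨y + j, by ring⟩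
  have hdvd2 : β ∣ (x + i) := (Nat.Coprime.dvd_of_dvd_mul_right hcop.symm hdvd)
  have h3 : β ≤ x + i := Nat.le_of_dvd (by omega) hdvd2
  nlinarith [Nat.one_le_iff_ne_zero.mp hj1]

-- no pair in range hits α*β exactly
lemma neq_ab {α β : ℕ} (hcop : Nat.Coprime α β) {i j : ℕ}
    (hi1 : 1 ≤ i) (hi2 : i ≤ β - 1) :
    i * α + j * β ≠ α * β := by
  intro h
  have hβ : 2 ≤ β := by omega
  have hdvd : β ∣ i * α := by
    have h1 : i * α = α * β - j * β := by omega
    rw [h1]; exact Nat.dvd_sub ⟨α, by ring⟩ ⟨j, by ring⟩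
  have hdvd2 : β ∣ i := Nat.Coprime.dvd_of_dvd_mul_right hcop.symm hdvd
  have := Nat.le_of_dvd (by omega) hdvd2
  omega

-- cancellation in the α-coordinate
lemma cancelα {α β : ℕ} (hcop : Nat.Coprime α β) {p q r s : ℕ}
    (hpr : p ≤ r) (hrβ : r < β) (h : p * α + q * β = r * α + s * β) :
    p = r ∧ q = s := by
  have hβ : 0 < β := by omega
  have hq : s ≤ q := by nlinarith
  have key : (r - p) * α = (q - s) * β := by
    have h1 : (r - p) * α + p * α = r * α := by rw [← add_mul]; congr 1; omega
    have h2 : (q - s) * β + s * β = q * β := by rw [← add_mul]; congr 1; omega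
    omega
  have hdvd : β ∣ (r - p) * α := ⟨q - s, by rw [key]; ring⟩
  have hdvd2 : β ∣ r - p := Nat.Coprime.dvd_of_dvd_mul_right hcop.symm hdvd
  have h0 : r - p = 0 := by
    rcases Nat.eq_zero_or_pos (r - p) with h' | h'
    · exact h'
    · have := Nat.le_of_dvd h' hdvd2; omega
  have : p = r := by omega
  refine ⟨this, ?_⟩
  subst this
  have : q * β = s * β := by omega
  exact Nat.eq_of_mul_eq_mul_right hβ this

lemma cancelβ {α β : ℕ} (hcop : Nat.Coprime α β) {p q r s : ℕ}
    (hqs : q ≤ s) (hsα : s < α) (h : p * α + q * β = r * α + s * β) :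
    p = r ∧ q = s := by
  have h' : q * β + p * α = s * β + r * α := by omega
  have := cancelα (α := β) (β := α) hcop.symm hqs hsα h'
  exact ⟨this.2, this.1⟩

-- every gap has a canonical representation
lemma exists_rep_s13 {α β : ℕ} (hα : 1 ≤ α) (hαβ : α < β) (hcop : Nat.Coprime α β)
    {n : ℕ} (hn : n ∉ S α β) :
    ∃ i j, 1 ≤ i ∧ i ≤ β - 1 ∧ 1 ≤ j ∧ j ≤ α - 1 ∧ n + i * α + j * β = α * β := by
  have hβ : 2 ≤ β := by omega
  haveI : NeZero β := ⟨by omega⟩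
  -- find i < β with β ∣ n + i * α
  obtain ⟨i, hiβ, hdvd⟩ : ∃ i, i < β ∧ β ∣ n + i * α := by
    set u : (ZMod β)ˣ := (ZMod.unitOfCoprime α hcop)⁻¹ with hu
    refine ⟨((-(n : ZMod β)) * u).val, ZMod.val_lt _, ?_⟩
    have hcast : (((-(n : ZMod β)) * u).val : ZMod β) = (-(n : ZMod β)) * u :=
      ZMod.natCast_rightInverse _
    have huα : (u : ZMod β) * (α : ZMod β) = 1 := by
      have : ((ZMod.unitOfCoprime α hcop : (ZMod β)ˣ) : ZMod β) = (α : ZMod β) :=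
        ZMod.coe_unitOfCoprime α hcop
      rw [hu]
      push_cast
      rw [← this]
      exact_mod_cast (ZMod.unitOfCoprime α hcop).inv_mul
    have : ((n + ((-(n : ZMod β)) * u).val * α : ℕ) : ZMod β) = 0 := by
      push_cast
      rw [hcast]
      linear_combination (-(n : ZMod β)) * huα
    exact (ZMod.natCast_eq_zero_iff _ _).mp this
  obtain ⟨m, hm⟩ := hdvd
  have hm' : n + i * α = m * β := by rw [hm]; ring
  have hi1 : 1 ≤ i := by
    rcases Nat.eq_zero_or_pos i with h0 | h0
    · exfalso; apply hn; subst h0; simp at hm'; exact ⟨0, m, by simpa using hm'⟩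
    · exact h0
  have hm1 : 1 ≤ m := by
    rcases Nat.eq_zero_or_pos m with h0 | h0
    · subst h0; simp at hm'
      have : i * α ≠ 0 := Nat.mul_ne_zero (by omega) (by omega)
      omega
    · exact h0
  have hmα : m ≤ α - 1 := by
    by_contra hcon
    push_neg at hcon
    have hmge : α ≤ m := by omega
    apply hn
    refine ⟨β - i, m - α, ?_⟩
    have e1 : (β - i) * α + i * α = β * α := by rw [← add_mul]; congr 1; omega
    have e2 : (m - α) * β + α * β = m * β := by rw [← add_mul]; congr 1; omega
    have e3 : β * α = α * β := mul_comm β α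
    omega
  refine ⟨i, α - m, hi1, by omega, by omega, by omega, ?_⟩
  have e2 : (α - m) * β + m * β = α * β := by rw [← add_mul]; congr 1; omega
  omega



lemma not_mem_Smod_iff {α β g a b : ℕ} (hα : 2 ≤ α) (hαβ : α < β) (hcop : Nat.Coprime α β)
    (ha1 : 1 ≤ a) (ha2 : a ≤ β - 1) (hb1 : 1 ≤ b) (hb2 : b ≤ α - 1)
    (hrep : g + a * α + b * β = α * β) (n : ℕ) :
    n ∉ Smod α β g ↔ ∃ i j, 1 ≤ i ∧ i ≤ β - 1 ∧ 1 ≤ j ∧ j ≤ α - 1 ∧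
      n + i * α + j * β = α * β ∧ (a < i ∨ b < j) := by
  constructor
  · intro hn
    have hnS : n ∉ S α β := fun h => hn (Or.inl h)
    obtain ⟨i, j, hi1, hi2, hj1, hj2, heq⟩ := exists_rep_s13 (by omega) hαβ hcop hnS
    refine ⟨i, j, hi1, hi2, hj1, hj2, heq, ?_⟩
    by_contra hcon
    push_neg at hcon
    obtain ⟨hia, hjb⟩ := hcon
    apply hn
    right
    refine ⟨(a - i) * α + (b - j) * β, ⟨a - i, b - j, rfl⟩, ?_⟩
    have e1 : (a - i) * α + i * α = a * α := by rw [← add_mul]; congr 1; omega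
    have e2 : (b - j) * β + j * β = b * β := by rw [← add_mul]; congr 1; omega
    omega
  · rintro ⟨i, j, hi1, hi2, hj1, hj2, heq, hdisj⟩
    rintro (hS | ⟨s, ⟨x, y, rfl⟩, rfl⟩)
    · exact nogap hcop hi1 hi2 hj1 hj2 heq hS
    · have key : (x + i) * α + (y + j) * β = a * α + b * β := by
        rw [add_mul, add_mul]; omega
      rcases le_or_gt (x + i) a with hle | hlt
      · obtain ⟨h1, h2⟩ := cancelα hcop hle (by omega) key
        omega
      · have hyb : y + j ≤ b := by
          by_contra hc
          push_neg at hc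
          have m1 : (a+1) * α ≤ (x+i) * α := mul_le_mul_left (by omega) α
          have m2 : (b+1) * β ≤ (y+j) * β := mul_le_mul_left (by omega) β
          have e1 : (a+1) * α = a * α + α := by ring
          have e2 : (b+1) * β = b * β + β := by ring
          omega
        obtain ⟨h1, h2⟩ := cancelβ hcop hyb (by omega) key
        omega

lemma Wval {α β g a b : ℕ} (hα : 2 ≤ α) (hαβ : α < β) (hcop : Nat.Coprime α β)
    (ha1 : 1 ≤ a) (ha2 : a ≤ β - 1) (hb1 : 1 ≤ b) (hb2 : b ≤ α - 2)
    (hab : b * β < a * α) (hrep : g + a * α + b * β = α * β) :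
    W α β g = 2 * (a : ℤ) * b - b * β := by
  classical
  have hβ : 3 ≤ β := by omega
  have hb2' : b ≤ α - 1 := by omega
  have hg1 : 1 ≤ g := by
    rcases Nat.eq_zero_or_pos g with h0 | h0
    · exfalso; exact neq_ab hcop ha1 ha2 (j := b) (by omega)
    · exact h0
  -- the conductor minus one
  have hFex : α + (b+1) * β ≤ α * β := by
    have h1 : (b+1) * β ≤ (α-1) * β := mul_le_mul_left (by omega) β
    have h2 : (α-1) * β + β = α * β := by
      have e : (α-1) * β + 1 * β = ((α-1)+1) * β := (add_mul _ _ _).symm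
      have e2 : α - 1 + 1 = α := by omega
      rw [e2] at e
      omega
    omega
  set F : ℕ := α * β - (α + (b+1) * β) with hFdef
  have hF : F + α + (b+1) * β = α * β := by omega
  have hFnot : F ∉ Smod α β g := by
    rw [not_mem_Smod_iff hα hαβ hcop ha1 ha2 hb1 hb2' hrep]
    exact ⟨1, b+1, le_refl 1, by omega, by omega, by omega, by rw [one_mul]; omega,
      Or.inr (by omega)⟩
  have hnotle : ∀ n, n ∉ Smod α β g → n ≤ F := by
    intro n hn
    rw [not_mem_Smod_iff hα hαβ hcop ha1 ha2 hb1 hb2' hrep] at hn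
    obtain ⟨i, j, hi1, hi2, hj1, hj2, heq, hdisj⟩ := hn
    have m1 : 1 * α ≤ i * α := mul_le_mul_left hi1 α
    have m2 : 1 * β ≤ j * β := mul_le_mul_left hj1 β
    have e1 : (b+1) * β = b * β + β := by ring
    rcases hdisj with hai | hbj
    · have m3 : (a+1) * α ≤ i * α := mul_le_mul_left (by omega) α
      have e2 : (a+1) * α = a * α + α := by ring
      omega
    · have m3 : (b+1) * β ≤ j * β := mul_le_mul_left (by omega) β
      omega
  have hbig : (F+1) ∈ {c | ∀ n, c ≤ n → n ∈ Smod α β g} := by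
    intro n hn
    by_contra hcon
    have := hnotle n hcon
    omega
  have hsemCond : semCond (Smod α β g) = F + 1 := by
    unfold semCond
    apply le_antisymm
    · exact Nat.sInf_le hbig
    · refine le_csInf ⟨F+1, hbig⟩ ?_
      intro c hc
      by_contra hcon
      exact hFnot (hc F (by omega))
  -- counting
  set Pall := (Finset.Icc 1 (β-1) ×ˢ Finset.Icc 1 (α-1)).filter
      (fun p => p.1 * α + p.2 * β < α * β) with hPalldef
  set P := Pall.filter (fun p => a < p.1 ∨ b < p.2) with hPdef
  have hsplit : P.card + (Pall.filter (fun p => ¬(a < p.1 ∨ b < p.2))).card = Pall.card :=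
    Finset.card_filter_add_card_filter_not _
  have hPrm : Pall.filter (fun p => ¬(a < p.1 ∨ b < p.2)) = Finset.Icc 1 a ×ˢ Finset.Icc 1 b := by
    ext ⟨i, j⟩
    simp only [hPalldef, Finset.mem_filter, Finset.mem_product, Finset.mem_Icc, not_or, not_lt]
    constructor
    · rintro ⟨⟨⟨⟨hi1, hi2⟩, hj1, hj2⟩, hlt⟩, hia, hjb⟩
      exact ⟨⟨hi1, hia⟩, hj1, hjb⟩
    · rintro ⟨⟨hi1, hia⟩, hj1, hjb⟩
      have m1 : i * α ≤ a * α := mul_le_mul_left hia α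
      have m2 : j * β ≤ b * β := mul_le_mul_left hjb β
      exact ⟨⟨⟨⟨hi1, by omega⟩, hj1, by omega⟩, by omega⟩, hia, hjb⟩
  have hPrmcard : (Pall.filter (fun p => ¬(a < p.1 ∨ b < p.2))).card = a * b := by
    rw [hPrm, Finset.card_product, Nat.card_Icc, Nat.card_Icc]
    simp
  have hPallcard : 2 * Pall.card + α + β = α * β + 1 := by
    have htot : Pall.card + ((Finset.Icc 1 (β-1) ×ˢ Finset.Icc 1 (α-1)).filter
        (fun p => ¬(p.1 * α + p.2 * β < α * β))).card = (β-1) * (α-1) := by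
      rw [hPalldef]
      rw [Finset.card_filter_add_card_filter_not]
      rw [Finset.card_product, Nat.card_Icc, Nat.card_Icc]
      congr 1 <;> omega
    have hbij : ((Finset.Icc 1 (β-1) ×ˢ Finset.Icc 1 (α-1)).filter
        (fun p => ¬(p.1 * α + p.2 * β < α * β))).card = Pall.card := by
      apply Finset.card_nbij' (fun p => (β - p.1, α - p.2)) (fun p => (β - p.1, α - p.2))
      · rintro ⟨i, j⟩ hp
        simp only [Finset.mem_coe, Finset.mem_filter, Finset.mem_product, Finset.mem_Icc, not_lt] at hp
        obtain ⟨⟨⟨hi1, hi2⟩, hj1, hj2⟩, hge⟩ := hp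
        have hne : i * α + j * β ≠ α * β := neq_ab hcop hi1 hi2
        simp only [Finset.mem_coe, hPalldef, Finset.mem_filter, Finset.mem_product, Finset.mem_Icc]
        have e1 : (β - i) * α + i * α = β * α := by rw [← add_mul]; congr 1; omega
        have e2 : (α - j) * β + j * β = α * β := by rw [← add_mul]; congr 1; omega
        have e3 : β * α = α * β := mul_comm β α
        exact ⟨⟨⟨by omega, by omega⟩, by omega, by omega⟩, by omega⟩
      · rintro ⟨i, j⟩ hp
        simp only [Finset.mem_coe, hPalldef, Finset.mem_filter, Finset.mem_product, Finset.mem_Icc] at hp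
        obtain ⟨⟨⟨hi1, hi2⟩, hj1, hj2⟩, hlt⟩ := hp
        simp only [Finset.mem_coe, Finset.mem_filter, Finset.mem_product, Finset.mem_Icc, not_lt]
        have e1 : (β - i) * α + i * α = β * α := by rw [← add_mul]; congr 1; omega
        have e2 : (α - j) * β + j * β = α * β := by rw [← add_mul]; congr 1; omega
        have e3 : β * α = α * β := mul_comm β α
        exact ⟨⟨⟨by omega, by omega⟩, by omega, by omega⟩, by omega⟩
      · rintro ⟨i, j⟩ hp
        simp only [Finset.mem_coe, Finset.mem_filter, Finset.mem_product, Finset.mem_Icc, not_lt] at hp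
        simp only [Prod.mk.injEq]
        omega
      · rintro ⟨i, j⟩ hp
        simp only [Finset.mem_coe, hPalldef, Finset.mem_filter, Finset.mem_product, Finset.mem_Icc] at hp
        simp only [Prod.mk.injEq]
        omega
    have hprod : (β-1) * (α-1) + α + β = α * β + 1 := by
      obtain ⟨α', rfl⟩ : ∃ α', α = α' + 1 := ⟨α - 1, by omega⟩
      obtain ⟨β', rfl⟩ : ∃ β', β = β' + 1 := ⟨β - 1, by omega⟩
      simp only [Nat.add_sub_cancel]
      ring
    omega
  -- the set of gaps of Smod as an explicit finset
  set G := P.image (fun p => α * β - (p.1 * α + p.2 * β)) with hGdef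
  have hGcard : G.card = P.card := by
    apply Finset.card_image_of_injOn
    rintro ⟨i, j⟩ hp ⟨i', j'⟩ hp' heq
    simp only [hPdef, hPalldef, Finset.coe_filter, Set.mem_setOf_eq, Finset.mem_filter,
      Finset.mem_product, Finset.mem_Icc] at hp hp'
    obtain ⟨⟨⟨⟨hi1, hi2⟩, hj1, hj2⟩, hlt⟩, _⟩ := hp
    obtain ⟨⟨⟨⟨hi1', hi2'⟩, hj1', hj2'⟩, hlt'⟩, _⟩ := hp'
    simp only at heq
    have hsum : i * α + j * β = i' * α + j' * β := by omega
    have : i = i' ∧ j = j' := by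
      rcases le_total i i' with h | h
      · exact cancelα hcop h (by omega) hsum
      · have := cancelα hcop h (by omega) hsum.symm
        exact ⟨this.1.symm, this.2.symm⟩
    simp [Prod.ext_iff]
    exact this
  have hGset : (Finset.range (F+1)).filter (fun n => n ∉ Smod α β g) = G := by
    ext n
    simp only [Finset.mem_filter, Finset.mem_range, hGdef, Finset.mem_image]
    constructor
    · rintro ⟨hlt, hn⟩
      rw [not_mem_Smod_iff hα hαβ hcop ha1 ha2 hb1 hb2' hrep] at hn
      obtain ⟨i, j, hi1, hi2, hj1, hj2, heq, hdisj⟩ := hn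
      have hne : i * α + j * β ≠ α * β := neq_ab hcop hi1 hi2
      refine ⟨(i, j), ?_, by simp; omega⟩
      simp only [hPdef, hPalldef, Finset.mem_filter, Finset.mem_product, Finset.mem_Icc]
      exact ⟨⟨⟨⟨hi1, hi2⟩, hj1, hj2⟩, by omega⟩, hdisj⟩
    · rintro ⟨⟨i, j⟩, hp, rfl⟩
      simp only [hPdef, hPalldef, Finset.mem_filter, Finset.mem_product, Finset.mem_Icc] at hp
      obtain ⟨⟨⟨⟨hi1, hi2⟩, hj1, hj2⟩, hlt⟩, hdisj⟩ := hp
      simp only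
      have hn : (α * β - (i * α + j * β)) ∉ Smod α β g := by
        rw [not_mem_Smod_iff hα hαβ hcop ha1 ha2 hb1 hb2' hrep]
        exact ⟨i, j, hi1, hi2, hj1, hj2, by omega, hdisj⟩
      exact ⟨by have := hnotle _ hn; omega, hn⟩
  have hcards : ((Finset.range (F+1)).filter (fun n => n ∈ Smod α β g)).card + P.card = F + 1 := by
    have := Finset.card_filter_add_card_filter_not
      (s := Finset.range (F+1)) (fun n => n ∈ Smod α β g)
    rw [hGset] at this
    rw [← hGcard]
    simpa using this
  have hdelta : semDelta (Smod α β g) =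
      ((Finset.range (F+1)).filter (fun n => n ∈ Smod α β g)).card := by
    unfold semDelta
    rw [hsemCond]
    rw [← Set.ncard_coe_finset]
    congr 1
    ext x
    simp only [Finset.coe_filter, Finset.mem_range, Set.mem_setOf_eq]
    tauto
  -- final computation
  unfold W
  rw [hsemCond, hdelta]
  have h1 : ((Finset.range (F+1)).filter (fun n => n ∈ Smod α β g)).card + P.card = F + 1 := hcards
  have e1 : (b+1) * β = b * β + β := by ring
  have hPle : P.card ≤ F + 1 := by omega
  zify at h1 hsplit hPallcard hPrmcard hF e1 ⊢
  linarith [h1, hsplit, hPallcard, hPrmcard, hF, e1]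


theorem stmt13 (α β g a b : ℕ) (hα : 0 < α) (hαβ : α < β) (hcop : Nat.Coprime α β)
    (hg : g ∉ S α β) (ha1 : 1 ≤ a) (ha2 : a ≤ β - 1) (hb1 : 1 ≤ b) (hb2 : b ≤ α - 1)
    (hrep : g + a * α + b * β = α * β) (ha : β / 2 < a) (hb : b ≤ α / 2) :
    ∀ g' : ℕ, g' + (β - a) * α + b * β = α * β →
      g' ∉ S α β ∧ W α β g' = - W α β g := by
  intro g' hrep'
  have hα2 : 2 ≤ α := by
    by_contra h
    push_neg at h
    have h1 : α = 1 := by omega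
    exact absurd ⟨g, 0, by rw [h1]; simp⟩ hg
  have hα3 : 3 ≤ α := by
    rcases Nat.lt_or_ge α 3 with h | h
    · exfalso
      have h2 : α = 2 := by omega
      subst h2
      have hb' : b = 1 := by omega
      subst hb'
      omega
    · exact h
  have hb2' : b ≤ α - 2 := by omega
  have hg1 : 1 ≤ g := by
    rcases Nat.eq_zero_or_pos g with h0 | h0
    · subst h0; exact absurd ⟨0, 0, by simp⟩ hg
    · exact h0
  have hab : b * β < a * α := by
    have h1 : β + 1 ≤ 2 * a := by omega
    have h2 : 2 * b ≤ α := by omega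
    nlinarith [mul_le_mul_left h1 α, mul_le_mul_left h2 β]
  have hab' : b * β < (β - a) * α := by
    have e1 : (β - a) * α + a * α = β * α := by rw [← add_mul]; congr 1; omega
    have e3 : β * α = α * β := mul_comm β α
    omega
  have hWg := Wval hα2 hαβ hcop ha1 ha2 hb1 hb2' hab hrep
  have hg'S : g' ∉ S α β := nogap hcop (i := β - a) (j := b) (by omega) (by omega) hb1 (by omega) hrep'
  have hWg' := Wval hα2 hαβ hcop (a := β - a) (by omega) (by omega) hb1 hb2' hab' hrep'
  refine ⟨hg'S, ?_⟩
  rw [hWg, hWg']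
  have hc : ((β - a : ℕ) : ℤ) = (β : ℤ) - a := by
    have : a ≤ β := by omega
    push_cast [this]
    ring
  rw [hc]
  ring
end

section
/- Let Γ = ⟨α, β⟩ with gcd(α,β)=1, and let g = αβ − aα − bβ be a gap with b > ⌊α/2⌋ and a ≤ ⌊β/2⌋ (so g lies in the upper triangle T_u). Then both semimodules Δ = Γ ∪ (Γ+g) and Δ' = Γ ∪ (Γ + (αβ − aα − (α−b)β)) have the same conductor, equal to (α−1)(β−1) − aα. -/
lemma not_mem_S (α β : ℕ) (hα : 0 < α) (hcop : Nat.Coprime α β) {x j n : ℕ}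
    (hx : x < β) (hj : 1 ≤ j) (hn : n + j * β = x * α) : n ∉ S α β := by
  rintro ⟨p, q, rfl⟩
  have hβ : 0 < β := lt_of_le_of_lt (Nat.zero_le x) hx
  have hpx : p < x := by
    by_contra h
    push_neg at h
    have : x * α ≤ p * α := Nat.mul_le_mul_right α h
    have : 1 * β ≤ j * β := Nat.mul_le_mul_right β hj
    omega
  have hdvd : β ∣ (x - p) * α := by
    refine ⟨q + j, ?_⟩
    have h1 : (x - p) * α + p * α = x * α := by
      rw [← Nat.add_mul, Nat.sub_add_cancel hpx.le]
    have h2 : β * (q + j) = q * β + j * β := by ring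
    omega
  have hβx : β ∣ (x - p) := (Nat.Coprime.dvd_of_dvd_mul_right hcop.symm hdvd)
  have := Nat.le_of_dvd (by omega) hβx
  omega

lemma decomp (α β : ℕ) (hα : 0 < α) (hβ : α < β) (hcop : Nat.Coprime α β) (n : ℕ) :
    n ∈ S α β ∨ ∃ i j, 1 ≤ i ∧ i ≤ β - 1 ∧ 1 ≤ j ∧ j ≤ α - 1 ∧ n + i * α + j * β = α * β := by
  haveI : NeZero β := ⟨by omega⟩
  set u : (ZMod β)ˣ := ZMod.unitOfCoprime α hcop with hu
  set x : ZMod β := (↑u)⁻¹ * (n : ZMod β) with hxdef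
  have hxα : ((x.val * α : ℕ) : ZMod β) = (n : ZMod β) := by
    push_cast
    rw [ZMod.natCast_val, ZMod.cast_id]
    have : ((α : ℕ) : ZMod β) = (u : ZMod β) := ZMod.coe_unitOfCoprime α hcop
    rw [hxdef, this]
    rw [mul_comm, ← mul_assoc, ZMod.mul_inv_of_unit _ u.isUnit, one_mul]
  have hmod : x.val * α ≡ n [MOD β] := (ZMod.natCast_eq_natCast_iff _ _ _).mp hxα
  have hxlt : x.val < β := ZMod.val_lt x
  by_cases hcase : x.val * α ≤ n
  · left
    obtain ⟨y, hy⟩ := (Nat.modEq_iff_dvd' hcase).mp hmod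
    have hyc : β * y = y * β := Nat.mul_comm _ _
    exact ⟨x.val, y, by omega⟩
  · right
    push_neg at hcase
    obtain ⟨j, hj⟩ := (Nat.modEq_iff_dvd' hcase.le).mp hmod.symm
    have hjc : β * j = j * β := Nat.mul_comm _ _
    have hj1 : 1 ≤ j := by
      rcases Nat.eq_zero_or_pos j with h | h
      · subst h; simp at hj; omega
      · exact h
    have hx1 : 1 ≤ x.val := by
      rcases Nat.eq_zero_or_pos x.val with h0 | h0
      · rw [h0] at hcase; simp at hcase
      · exact h0
    have hxβ : x.val * α ≤ (β - 1) * α := Nat.mul_le_mul_right α (by omega)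
    have hjα : j ≤ α - 1 := by
      by_contra h
      push_neg at h
      have : α * β ≤ j * β := Nat.mul_le_mul_right β (by omega)
      have h2 : (β - 1) * α + α = β * α := by
        rw [← Nat.succ_mul]
        congr 1
        omega
      have : α * β = β * α := Nat.mul_comm _ _
      omega
    refine ⟨β - x.val, j, by omega, by omega, hj1, hjα, ?_⟩
    have h2 : (β - x.val) * α + x.val * α = β * α := by
      rw [← Nat.add_mul, Nat.sub_add_cancel hxlt.le]
    have : α * β = β * α := Nat.mul_comm _ _
    omega

lemma cond_eq (α β a c g : ℕ) (hα : 0 < α) (hβ : α < β) (hcop : Nat.Coprime α β)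
    (hc2 : c ≤ α - 1) (hac : a * α < c * β)
    (hrep : g + a * α + c * β = α * β) (hg : 1 ≤ g)
    (hC : (a + 1) * α + β ≤ α * β) :
    semCond (Smod α β g) = α * β + 1 - ((a + 1) * α + β) := by
  have hexp : (a + 1) * α = a * α + α := by ring
  obtain ⟨Cv, hCv⟩ : ∃ Cv, Cv + ((a + 1) * α + β) = α * β + 1 :=
    ⟨α * β + 1 - ((a + 1) * α + β), by omega⟩
  obtain ⟨F, hF⟩ : ∃ F, F + 1 = Cv := ⟨Cv - 1, by omega⟩
  have ha1 : a + 1 < β := by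
    by_contra h
    push_neg at h
    have : β * α ≤ (a+1) * α := Nat.mul_le_mul_right α h
    have : α * β = β * α := Nat.mul_comm _ _
    have : 0 < β := by omega
    nlinarith
  -- upper bound: all n ≥ Cv are in Smod
  have hmem : ∀ n, Cv ≤ n → n ∈ Smod α β g := by
    intro n hn
    rcases decomp α β hα hβ hcop n with h | ⟨i, j, hi1, hi2, hj1, hj2, heq⟩
    · exact Or.inl h
    · right
      have hjβ : 1 * β ≤ j * β := Nat.mul_le_mul_right β hj1
      have hiα : 1 * α ≤ i * α := Nat.mul_le_mul_right α hi1
      have hia : i ≤ a := by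
        have h1 : i * α < (a + 1) * α := by omega
        exact Nat.lt_succ_iff.mp (Nat.lt_of_mul_lt_mul_right h1)
      have hjc : j ≤ c := by
        have h1 : j * β < (c + 1) * β := by
          have : (c+1) * β = c * β + β := by ring
          omega
        exact Nat.lt_succ_iff.mp (Nat.lt_of_mul_lt_mul_right h1)
      refine ⟨(a - i) * α + (c - j) * β, ⟨a - i, c - j, rfl⟩, ?_⟩
      have e1 : (a - i) * α + i * α = a * α := by
        rw [← Nat.add_mul, Nat.sub_add_cancel hia]
      have e2 : (c - j) * β + j * β = c * β := by
        rw [← Nat.add_mul, Nat.sub_add_cancel hjc]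
      omega
  -- F is not in Smod
  have hFrep : F + ((a + 1) * α + β) = α * β := by omega
  have hFnot : F ∉ Smod α β g := by
    rintro (h | ⟨s, ⟨p, q, rfl⟩, hFeq⟩)
    · refine not_mem_S α β hα hcop (x := β - (a + 1)) (j := 1) (by omega) le_rfl ?_ h
      have e : (β - (a + 1)) * α + (a + 1) * α = β * α := by
        rw [← Nat.add_mul, Nat.sub_add_cancel ha1.le]
      have : α * β = β * α := Nat.mul_comm _ _
      omega
    · -- F = g + (p α + q β) ; derive (p+1) α + (q+1) β = c β
      have E : (p + 1) * α + (q + 1) * β = c * β := by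
        have e1 : (p + 1) * α = p * α + α := by ring
        have e2 : (q + 1) * β = q * β + β := by ring
        omega
      have hq1c : q + 1 ≤ c := by
        by_contra h
        push_neg at h
        have : c * β ≤ q * β := Nat.mul_le_mul_right β (by omega)
        have : (q+1) * β = q * β + β := by ring
        omega
      have hd : β ∣ (p + 1) * α := by
        refine ⟨c - (q + 1), ?_⟩
        have e : (c - (q + 1)) * β + (q + 1) * β = c * β := by
          rw [← Nat.add_mul, Nat.sub_add_cancel hq1c]
        have : β * (c - (q+1)) = (c - (q+1)) * β := Nat.mul_comm _ _
        omega
      have hβp : β ∣ p + 1 := Nat.Coprime.dvd_of_dvd_mul_right hcop.symm hd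
      have h1 : β ≤ p + 1 := Nat.le_of_dvd (by omega) hβp
      have h2 : β * α ≤ (p + 1) * α := Nat.mul_le_mul_right α h1
      have h3 : c * β ≤ (α - 1) * β := Nat.mul_le_mul_right β hc2
      have h4 : (α - 1) * β + β = α * β := by
        rw [← Nat.succ_mul]
        congr 1
        omega
      have : α * β = β * α := Nat.mul_comm _ _
      omega
  have key : semCond (Smod α β g) = Cv := by
    apply le_antisymm
    · exact Nat.sInf_le (show Cv ∈ {c | ∀ n, c ≤ n → n ∈ Smod α β g} from hmem)
    · refine le_csInf ?_ ?_
      · exact ⟨Cv, hmem⟩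
      intro t ht
      by_contra h
      push_neg at h
      exact hFnot (ht F (by omega))
  omega

theorem stmt14 (α β g a b : ℕ) (hα : 0 < α) (hαβ : α < β) (hcop : Nat.Coprime α β)
    (hg : g ∉ S α β) (ha1 : 1 ≤ a) (ha2 : a ≤ β - 1) (hb1 : 1 ≤ b) (hb2 : b ≤ α - 1)
    (hrep : g + a * α + b * β = α * β) (hb : α / 2 < b) (ha : a ≤ β / 2) :
    ∀ g' : ℕ, g' + a * α + (α - b) * β = α * β →
      semCond (Smod α β g) = (α - 1) * (β - 1) - a * α ∧
      semCond (Smod α β g') = (α - 1) * (β - 1) - a * α := by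
  intro g' hrep'
  have hα3 : 3 ≤ α := by omega
  have hg1 : 1 ≤ g := by
    rcases Nat.eq_zero_or_pos g with h | h
    · exact absurd (h ▸ ⟨0, 0, by simp⟩) hg
    · exact h
  -- a*α < b*β
  have h2a : 2 * a ≤ β := by omega
  have h2b : α + 1 ≤ 2 * b := by omega
  have hab : a * α < b * β := by
    have h1 : (2 * a) * α ≤ β * α := Nat.mul_le_mul_right α h2a
    have h2 : (α + 1) * β ≤ (2 * b) * β := Nat.mul_le_mul_right β h2b
    nlinarith
  -- (α - b) facts
  have hbb : (α - b) * β + b * β = α * β := by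
    rw [← Nat.add_mul, Nat.sub_add_cancel (by omega)]
  have hab' : a * α < (α - b) * β := by omega
  have hg'1 : 1 ≤ g' := by omega
  -- hC
  have hC : (a + 1) * α + β ≤ α * β := by
    have hb2' : 2 ≤ b := by omega
    have h1 : 2 * β ≤ b * β := Nat.mul_le_mul_right β hb2'
    have hexp : (a + 1) * α = a * α + α := by ring
    omega
  have e : (α - 1) * (β - 1) + α + β = α * β + 1 := by
    obtain ⟨α', rfl⟩ : ∃ α', α = α' + 1 := ⟨α - 1, by omega⟩
    obtain ⟨β', rfl⟩ : ∃ β', β = β' + 1 := ⟨β - 1, by omega⟩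
    simp
    ring
  have hexp : (a + 1) * α = a * α + α := by ring
  have hfin : α * β + 1 - ((a + 1) * α + β) = (α - 1) * (β - 1) - a * α := by omega
  constructor
  · rw [cond_eq α β a b g hα hαβ hcop hb2 hab hrep hg1 hC]
    exact hfin
  · rw [cond_eq α β a (α - b) g' hα hαβ hcop (by omega) hab' hrep' hg'1 hC]
    exact hfin
end

section
/- Let Γ = ⟨α, β⟩ with gcd(α,β)=1 and let g be a gap of Γ. If g is a fundamental gap of Γ (i.e., 2g ∈ Γ and 3g ∈ Γ), then W(g) ≤ 0. -/
lemma S_add_s16 {α β a b : ℕ} (ha : a ∈ S α β) (hb : b ∈ S α β) : a + b ∈ S α β := by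
  obtain ⟨x1, y1, rfl⟩ := ha
  obtain ⟨x2, y2, rfl⟩ := hb
  exact ⟨x1 + x2, y1 + y2, by ring⟩

lemma Smod_add {α β g a b : ℕ} (h2g : 2 * g ∈ S α β)
    (ha : a ∈ Smod α β g) (hb : b ∈ Smod α β g) : a + b ∈ Smod α β g := by
  rcases ha with ha | ⟨s, hs, rfl⟩
  · rcases hb with hb | ⟨t, ht, rfl⟩
    · exact Or.inl (S_add_s16 ha hb)
    · exact Or.inr ⟨t + a, S_add_s16 ht ha, by ring⟩
  · rcases hb with hb | ⟨t, ht, rfl⟩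
    · exact Or.inr ⟨s + b, S_add_s16 hs hb, by ring⟩
    · refine Or.inl ?_
      have : (g + s) + (g + t) = (2 * g) + (s + t) := by ring
      rw [this]
      exact S_add_s16 h2g (S_add_s16 hs ht)

lemma S_cofinite {α β : ℕ} (hα : 1 < α) (hβ : 1 < β) (hcop : Nat.Coprime α β) :
    ∀ n, α * β ≤ n → n ∈ S α β := by
  intro n hn
  have hF := frobeniusNumber_pair hcop hα hβ
  have hmem : n ∈ AddSubmonoid.closure ({α, β} : Set ℕ) := by
    by_contra h
    have h1 := hF.2 h
    have h2 : α + β ≤ α * β := Nat.add_le_mul hα hβ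
    omega
  rw [AddSubmonoid.mem_closure_pair] at hmem
  obtain ⟨x, y, hxy⟩ := hmem
  exact ⟨x, y, by simpa [smul_eq_mul] using hxy.symm⟩

theorem stmt16 (α β g : ℕ) (hα : 0 < α) (hαβ : α < β) (hcop : Nat.Coprime α β)
    (hg : g ∉ S α β) (h2g : 2 * g ∈ S α β) (h3g : 3 * g ∈ S α β) :
    W α β g ≤ 0 := by
  classical
  have hα1 : 1 < α := by
    rcases Nat.lt_or_ge α 2 with h | h
    · interval_cases α
      · exact absurd ⟨g, 0, by ring⟩ hg
    · exact h
  have hβ1 : 1 < β := lt_trans hα1 hαβ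
  set Δ := Smod α β g with hΔ
  set c := semCond Δ with hc
  have hcof : ∀ n, α * β ≤ n → n ∈ Δ := fun n hn =>
    Or.inl (S_cofinite hα1 hβ1 hcop n hn)
  have hne : ({c | ∀ n, c ≤ n → n ∈ Δ} : Set ℕ).Nonempty := ⟨α * β, hcof⟩
  have hcmem : ∀ n, c ≤ n → n ∈ Δ := Nat.sInf_mem hne
  rcases Nat.eq_zero_or_pos c with hc0 | hcpos
  · have hδ : semDelta Δ = 0 := by
      unfold semDelta
      rw [← hc, hc0]
      simp
    unfold W
    rw [← hΔ, ← hc, hδ, hc0]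
    simp
  · set F := c - 1 with hFdef
    have hFc : c = F + 1 := by omega
    have hF : F ∉ Δ := by
      intro hFin
      have hFin' : F ∈ {c | ∀ n, c ≤ n → n ∈ Δ} := by
        intro n hn
        rcases Nat.eq_or_lt_of_le hn with rfl | h
        · exact hFin
        · exact hcmem n (by omega)
      have hle : c ≤ F := Nat.sInf_le hFin'
      omega
    -- symmetry
    have hsym : ∀ x, x ∈ Δ → x ≤ F → F - x ∉ Δ := by
      intro x hx hxF hFx
      apply hF
      have : F = x + (F - x) := by omega
      rw [this]
      exact Smod_add h2g hx hFx
    -- counting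
    set D : Finset ℕ := (Finset.range c).filter (· ∈ Δ) with hD
    have hδ : semDelta Δ = D.card := by
      unfold semDelta
      rw [← hc]
      have : {x ∈ Δ | x < c} = ↑D := by
        ext x
        simp [hD, Finset.mem_filter, Finset.mem_range, and_comm]
      rw [this, Set.ncard_coe_finset]
    have hinj : D.card ≤ ((Finset.range c).filter (· ∉ Δ)).card := by
      apply Finset.card_le_card_of_injOn (fun x => F - x)
      · intro x hx
        simp only [hD, Finset.mem_coe, Finset.mem_filter, Finset.mem_range] at hx ⊢
        have hxF : x ≤ F := by omega
        exact ⟨by omega, hsym x hx.2 hxF⟩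
      · intro x hx y hy hxy
        simp only [hD, Finset.coe_filter, Set.mem_setOf_eq, Finset.mem_range] at hx hy
        obtain ⟨hx1, -⟩ := hx
        obtain ⟨hy1, -⟩ := hy
        have hxy' : F - x = F - y := hxy
        omega
    have hsplit : D.card + ((Finset.range c).filter (· ∉ Δ)).card = c := by
      have := Finset.card_filter_add_card_filter_not
        (s := Finset.range c) (p := (· ∈ Δ))
      simpa [hD] using this
    have hkey : 2 * semDelta Δ ≤ c := by
      rw [hδ]; omega
    unfold W
    rw [← hΔ, ← hc]
    have := hkey
    omega
end

section
/- Let Γ = ⟨α, β⟩ with gcd(α,β)=1, α < β, and α, β both odd. Let T_u be the set of gaps αβ − aα − bβ with b > (α−1)/2 and T_r the set of gaps with a > (β−1)/2. Then |T_u| + |T_r| = (α−1)(β−1)/4. -/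
lemma notS_aux (α β : ℕ) (hα : 0 < α) (hcop : Nat.Coprime α β)
    (a b g : ℕ) (ha : 1 ≤ a) (hb : 1 ≤ b) (heq : g + a * α + b * β = α * β) :
    g ∉ S α β := by
  rintro ⟨x, y, hxy⟩
  have hxa : (x + a) * α = x * α + a * α := by ring
  have hyb : (y + b) * β = y * β + b * β := by ring
  have hsum : (x + a) * α + (y + b) * β = α * β := by omega
  have hle : (x + a) * α ≤ β * α := by
    rw [mul_comm β α] at *; omega
  have hxab : x + a ≤ β := Nat.le_of_mul_le_mul_right hle hα
  have hmulsub : α * (β - (x + a)) = α * β - α * (x + a) := Nat.mul_sub α β (x + a)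
  have hcomm : α * (x + a) = (x + a) * α := mul_comm _ _
  have hsubmul : (β - (x + a)) * α ≤ β * α := Nat.mul_le_mul_right α (Nat.sub_le _ _)
  have hdvd : α ∣ (y + b) * β := ⟨β - (x + a), by
    rw [hmulsub, hcomm]
    omega⟩
  have hdvd2 : α ∣ y + b := hcop.dvd_of_dvd_mul_right hdvd
  have hge : α ≤ y + b := Nat.le_of_dvd (by omega) hdvd2
  have : α * β ≤ (y + b) * β := Nat.mul_le_mul_right β hge
  have hzero : (x + a) * α = 0 := by omega
  rcases Nat.mul_eq_zero.mp hzero with h | h <;> omega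

theorem stmt18 (α β : ℕ) (hα : 0 < α) (hαβ : α < β) (hcop : Nat.Coprime α β)
    (hαodd : Odd α) (hβodd : Odd β) :
    Set.ncard {g : ℕ | g ∉ S α β ∧ ∃ a b : ℕ, 1 ≤ a ∧ a ≤ β - 1 ∧ 1 ≤ b ∧ b ≤ α - 1 ∧
        g + a * α + b * β = α * β ∧ (α - 1) / 2 < b} +
      Set.ncard {g : ℕ | g ∉ S α β ∧ ∃ a b : ℕ, 1 ≤ a ∧ a ≤ β - 1 ∧ 1 ≤ b ∧ b ≤ α - 1 ∧
        g + a * α + b * β = α * β ∧ (β - 1) / 2 < a} =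
      (α - 1) * (β - 1) / 4 := by
  obtain ⟨k, hk⟩ := hαodd
  obtain ⟨l, hl⟩ := hβodd
  set m : ℕ := (α - 1) / 2 with hm
  set n : ℕ := (β - 1) / 2 with hn
  have hmk : α = 2 * m + 1 := by omega
  have hnl : β = 2 * n + 1 := by omega
  have hβpos : 0 < β := by omega
  -- the rectangle
  set R : Finset (ℕ × ℕ) := Finset.Icc 1 n ×ˢ Finset.Icc 1 m with hR
  set D1 : Finset (ℕ × ℕ) := R.filter (fun p => p.1 * α < p.2 * β) with hD1
  set D2 : Finset (ℕ × ℕ) := R.filter (fun p => ¬ p.1 * α < p.2 * β) with hD2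
  -- no lattice point of R on the diagonal
  have hne : ∀ p ∈ R, p.1 * α ≠ p.2 * β := by
    rintro ⟨a, b⟩ hp hEq
    simp only [hR, Finset.mem_product, Finset.mem_Icc] at hp
    have hdvd : β ∣ a * α := ⟨b, by rw [hEq]; ring⟩
    have : β ∣ a := Nat.Coprime.dvd_of_dvd_mul_right (Nat.coprime_comm.mp hcop) hdvd
    have := Nat.le_of_dvd (by omega) this
    omega
  -- the first set equals the image of D1
  have hset1 : {g : ℕ | g ∉ S α β ∧ ∃ a b : ℕ, 1 ≤ a ∧ a ≤ β - 1 ∧ 1 ≤ b ∧ b ≤ α - 1 ∧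
        g + a * α + b * β = α * β ∧ (α - 1) / 2 < b}
      = (fun p : ℕ × ℕ => p.2 * β - p.1 * α) '' ↑D1 := by
    ext g
    simp only [Set.mem_setOf_eq, Set.mem_image, Finset.coe_filter, Set.mem_setOf_eq, hD1,
      Finset.mem_coe, Finset.mem_filter, hR, Finset.mem_product, Finset.mem_Icc]
    constructor
    · rintro ⟨hgS, a, b, ha1, ha2, hb1, hb2, heq, hbm⟩
      have hg0 : g ≠ 0 := fun h => hgS (h ▸ ⟨0, 0, by simp⟩)
      have hsub : (α - b) * β = α * β - b * β := Nat.sub_mul α b β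
      have halt : a * α < (α - b) * β := by omega
      have h2ab : 2 * (α - b) ≤ α - 1 := by omega
      have h1 : 2 * (a * α) < 2 * ((α - b) * β) := by omega
      have h2 : (2 * (α - b)) * β ≤ (α - 1) * β := Nat.mul_le_mul_right β h2ab
      have h2' : (2 * (α - b)) * β = 2 * ((α - b) * β) := by ring
      have h3 : (α - 1) * β < α * β := (Nat.mul_lt_mul_right hβpos).mpr (by omega)
      have h4 : (2 * a) * α < β * α := by
        have : 2 * (a * α) < α * β := by omega
        calc (2 * a) * α = 2 * (a * α) := by ring
          _ < α * β := this
          _ = β * α := mul_comm _ _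
      have h5 : 2 * a < β := Nat.lt_of_mul_lt_mul_right h4
      refine ⟨(a, α - b), ⟨⟨⟨ha1, by omega⟩, by omega, by omega⟩, halt⟩, ?_⟩
      show (α - b) * β - a * α = g
      omega
    · rintro ⟨⟨a, b⟩, ⟨⟨⟨ha1, ha2⟩, hb1, hb2⟩, hlt⟩, hg⟩
      dsimp only at hlt hg
      have hbα : b < α := by omega
      have hsub : (α - b) * β = α * β - b * β := Nat.sub_mul α b β
      have hbβ : b * β ≤ α * β := Nat.mul_le_mul_right β (by omega)
      have heq : g + a * α + (α - b) * β = α * β := by omega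
      refine ⟨notS_aux α β hα hcop a (α - b) g ha1 (by omega) heq,
        a, α - b, ha1, by omega, by omega, by omega, heq, by omega⟩
  -- the second set equals the image of D2
  have hset2 : {g : ℕ | g ∉ S α β ∧ ∃ a b : ℕ, 1 ≤ a ∧ a ≤ β - 1 ∧ 1 ≤ b ∧ b ≤ α - 1 ∧
        g + a * α + b * β = α * β ∧ (β - 1) / 2 < a}
      = (fun p : ℕ × ℕ => p.1 * α - p.2 * β) '' ↑D2 := by
    ext g
    simp only [Set.mem_setOf_eq, Set.mem_image, hD2, Finset.mem_coe, Finset.mem_filter, hR,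
      Finset.mem_product, Finset.mem_Icc]
    constructor
    · rintro ⟨hgS, a, b, ha1, ha2, hb1, hb2, heq, hbn⟩
      have hg0 : g ≠ 0 := fun h => hgS (h ▸ ⟨0, 0, by simp⟩)
      have hsub : (β - a) * α = β * α - a * α := Nat.sub_mul β a α
      have hβα : β * α = α * β := mul_comm _ _
      have halt : b * β < (β - a) * α := by omega
      have h2ab : 2 * (β - a) ≤ β - 1 := by omega
      have h2 : (2 * (β - a)) * α ≤ (β - 1) * α := Nat.mul_le_mul_right α h2ab
      have h2' : (2 * (β - a)) * α = 2 * ((β - a) * α) := by ring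
      have h3 : (β - 1) * α < β * α := (Nat.mul_lt_mul_right hα).mpr (by omega)
      have h4 : (2 * b) * β < α * β := by
        have : 2 * (b * β) < β * α := by omega
        calc (2 * b) * β = 2 * (b * β) := by ring
          _ < β * α := this
          _ = α * β := mul_comm _ _
      have h5 : 2 * b < α := Nat.lt_of_mul_lt_mul_right h4
      have hne' : (β - a) * α ≠ b * β := hne (β - a, b) (by
        simp only [hR, Finset.mem_product, Finset.mem_Icc]
        exact ⟨⟨by omega, by omega⟩, by omega, by omega⟩)
      refine ⟨(β - a, b), ⟨⟨⟨by omega, by omega⟩, hb1, by omega⟩, ?_⟩, ?_⟩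
      · show ¬ (β - a) * α < b * β
        omega
      · show (β - a) * α - b * β = g
        omega
    · rintro ⟨⟨a, b⟩, ⟨⟨⟨ha1, ha2⟩, hb1, hb2⟩, hlt⟩, hg⟩
      dsimp only at hlt hg
      have hne' : a * α ≠ b * β := hne (a, b) (by
        simp only [hR, Finset.mem_product, Finset.mem_Icc]
        exact ⟨⟨ha1, ha2⟩, hb1, hb2⟩)
      have haα : a < β := by omega
      have hsub : (β - a) * α = β * α - a * α := Nat.sub_mul β a α
      have hβα : β * α = α * β := mul_comm _ _
      have haβ : a * α ≤ β * α := Nat.mul_le_mul_right α (by omega)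
      have heq : g + (β - a) * α + b * β = α * β := by omega
      refine ⟨notS_aux α β hα hcop (β - a) b g (by omega) hb1 heq,
        β - a, b, by omega, by omega, hb1, by omega, heq, by omega⟩
  -- injectivity on D1
  have hinj1 : Set.InjOn (fun p : ℕ × ℕ => p.2 * β - p.1 * α) ↑D1 := by
    rintro ⟨a, b⟩ hp ⟨a', b'⟩ hq hEq
    simp only [hD1, Finset.mem_coe, Finset.mem_filter, hR, Finset.mem_product,
      Finset.mem_Icc] at hp hq
    dsimp only at hEq
    have h1 : b * β + a' * α = b' * β + a * α := by omega
    have hmod : a' * α ≡ a * α [MOD β] := by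
      have h2 : b * β + a' * α ≡ b' * β + a * α [MOD β] := h1 ▸ Nat.ModEq.refl _
      have h3 : b * β ≡ 0 [MOD β] := (Nat.modEq_zero_iff_dvd).mpr ⟨b, mul_comm _ _⟩
      have h4 : b' * β ≡ 0 [MOD β] := (Nat.modEq_zero_iff_dvd).mpr ⟨b', mul_comm _ _⟩
      calc a' * α = 0 + a' * α := by omega
        _ ≡ b * β + a' * α [MOD β] := Nat.ModEq.add h3.symm (Nat.ModEq.refl _)
        _ = b' * β + a * α := h1
        _ ≡ 0 + a * α [MOD β] := Nat.ModEq.add h4 (Nat.ModEq.refl _)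
        _ = a * α := by omega
    have hmod2 : α * a' ≡ α * a [MOD β] := by
      rw [mul_comm α a', mul_comm α a]; exact hmod
    have : a' ≡ a [MOD β] := (Nat.ModEq.cancel_left_of_coprime hcop.symm hmod2)
    have haa : a' % β = a % β := this
    rw [Nat.mod_eq_of_lt (by omega), Nat.mod_eq_of_lt (by omega)] at haa
    have : a = a' := haa.symm
    subst this
    have hbb : b * β = b' * β := by omega
    have : b = b' := Nat.eq_of_mul_eq_mul_right hβpos hbb
    simp [this]
  -- injectivity on D2
  have hinj2 : Set.InjOn (fun p : ℕ × ℕ => p.1 * α - p.2 * β) ↑D2 := by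
    rintro ⟨a, b⟩ hp ⟨a', b'⟩ hq hEq
    simp only [hD2, Finset.mem_coe, Finset.mem_filter, hR, Finset.mem_product,
      Finset.mem_Icc] at hp hq
    dsimp only at hEq
    have h1 : a * α + b' * β = a' * α + b * β := by omega
    have hmod : a * α ≡ a' * α [MOD β] := by
      have h3 : b * β ≡ 0 [MOD β] := (Nat.modEq_zero_iff_dvd).mpr ⟨b, mul_comm _ _⟩
      have h4 : b' * β ≡ 0 [MOD β] := (Nat.modEq_zero_iff_dvd).mpr ⟨b', mul_comm _ _⟩
      calc a * α = 0 + a * α := by omega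
        _ ≡ b' * β + a * α [MOD β] := Nat.ModEq.add h4.symm (Nat.ModEq.refl _)
        _ = b * β + a' * α := by omega
        _ ≡ 0 + a' * α [MOD β] := Nat.ModEq.add h3 (Nat.ModEq.refl _)
        _ = a' * α := by omega
    have hmod2 : α * a ≡ α * a' [MOD β] := by
      rw [mul_comm α a, mul_comm α a']; exact hmod
    have : a ≡ a' [MOD β] := (Nat.ModEq.cancel_left_of_coprime hcop.symm hmod2)
    have haa : a % β = a' % β := this
    rw [Nat.mod_eq_of_lt (by omega), Nat.mod_eq_of_lt (by omega)] at haa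
    subst haa
    have hbb : b' * β = b * β := by omega
    have : b = b' := (Nat.eq_of_mul_eq_mul_right hβpos hbb).symm
    simp [this]
  rw [hset1, hset2, Set.ncard_image_of_injOn hinj1, Set.ncard_image_of_injOn hinj2,
    Set.ncard_coe_finset, Set.ncard_coe_finset]
  have hcard : D1.card + D2.card = R.card := by
    rw [hD1, hD2]
    exact Finset.card_filter_add_card_filter_not _
  rw [hcard, hR, Finset.card_product]
  have hc1 : (Finset.Icc 1 n).card = n := by simp
  have hc2 : (Finset.Icc 1 m).card = m := by simp
  rw [hc1, hc2]
  have h4 : (α - 1) * (β - 1) = 4 * (n * m) := by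
    rw [show α - 1 = 2 * m by omega, show β - 1 = 2 * n by omega]; ring
  rw [h4, Nat.mul_div_cancel_left _ (by norm_num)]
end
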